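/- arXiv:2010.12901 — 8 statements merged into one kernel-verified Lean document; each statement's English description precedes it below -/
import Mathlib

section
/- Let F(x,y) = (y, -x + s(y)). A point (x,y) ∈ ℝ² has some iterate landing on the discontinuity line {y = 0} (i.e. there exists n ∈ ℕ with the second coordinate of Fⁿ(x,y) equal to 0) if and only if x ∈ ℤ or y ∈ ℤ. Consequently the critical set of F is exactly the integer grid (⋃_{k∈ℤ}{x=k}) ∪ (⋃_{ℓ∈ℤ}{y=ℓ}). -/
/-!
If a coordinate of `F p` is an integer then so is a coordinate of `p`, since
`F (a, b) = (b, -a ± 1)`; this gives the forward implication. Conversely, if `x ∈ ℤ` then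
`F (x, y)` has an integer second coordinate, so it suffices to treat `(x, m)` with `m ∈ ℤ`.
Off the line `y = 0` the map commutes with `p ↦ -p`, which reduces to `m ≥ 0`. There `F⁴` acts
as a translation: it lowers `x` by `2` until `x ≤ 1`, and from then on lowers `m` by `2` until
`m ∈ {0, 1}`, and `(x, 1)` lands on `y = 0` after two steps.
-/

noncomputable def s (y : ℝ) : ℝ := if 0 ≤ y then 1 else -1

noncomputable def F (q : ℝ × ℝ) : ℝ × ℝ := (q.2, -q.1 + s q.2)

lemma s_of_nonneg {y : ℝ} (h : 0 ≤ y) : s y = 1 := if_pos h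

lemma s_of_neg {y : ℝ} (h : y < 0) : s y = -1 := if_neg h.not_ge

lemma s_neg {y : ℝ} (h : y ≠ 0) : s (-y) = -s y := by
  rcases h.lt_or_gt with h | h
  · rw [s_of_neg h, s_of_nonneg (by linarith), neg_neg]
  · rw [s_of_nonneg h.le, s_of_neg (by linarith)]

lemma exists_intCast_eq_s (y : ℝ) : ∃ e : ℤ, s y = e := by
  unfold s
  split_ifs
  exacts [⟨1, by norm_num⟩, ⟨-1, by norm_num⟩]

lemma F_of_nonneg {a b : ℝ} (h : 0 ≤ b) : F (a, b) = (b, -a + 1) := by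
  rw [F, s_of_nonneg h]

lemma F_of_neg {a b : ℝ} (h : b < 0) : F (a, b) = (b, -a - 1) := by
  rw [F, s_of_neg h, sub_eq_add_neg]

lemma F_neg {p : ℝ × ℝ} (h : p.2 ≠ 0) : F (-p) = -F p := by
  simp only [F, Prod.fst_neg, Prod.snd_neg, s_neg h, Prod.neg_mk, neg_add]

lemma iterate_F_neg {p : ℝ × ℝ} {n : ℕ} (h : ∀ k < n, (F^[k] p).2 ≠ 0) :
    F^[n] (-p) = -F^[n] p := by
  induction n with
  | zero => rfl
  | succ n ih =>
    rw [Function.iterate_succ_apply', Function.iterate_succ_apply',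
      ih fun k hk => h k (by omega), F_neg (h n (by omega))]

def OnGrid (p : ℝ × ℝ) : Prop := (∃ k : ℤ, p.1 = k) ∨ ∃ l : ℤ, p.2 = l

lemma OnGrid.of_F {p : ℝ × ℝ} (h : OnGrid (F p)) : OnGrid p := by
  obtain ⟨e, he⟩ := exists_intCast_eq_s p.2
  rcases h with ⟨k, hk⟩ | ⟨l, hl⟩
  · exact Or.inr ⟨k, hk⟩
  · refine Or.inl ⟨e - l, ?_⟩
    simp only [F] at hl
    push_cast
    linarith

lemma OnGrid.of_iterate {p : ℝ × ℝ} (n : ℕ) (h : OnGrid (F^[n] p)) : OnGrid p := by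
  induction n with
  | zero => exact h
  | succ n ih => exact ih (OnGrid.of_F (by rwa [← Function.iterate_succ_apply' F]))

def HitsDiscontinuity (p : ℝ × ℝ) : Prop := ∃ n : ℕ, (F^[n] p).2 = 0

lemma HitsDiscontinuity.onGrid {p : ℝ × ℝ} (h : HitsDiscontinuity p) : OnGrid p := by
  obtain ⟨n, hn⟩ := h
  exact OnGrid.of_iterate n (Or.inr ⟨0, by rw [hn, Int.cast_zero]⟩)

lemma HitsDiscontinuity.of_iterate {p : ℝ × ℝ} (k : ℕ) (h : HitsDiscontinuity (F^[k] p)) :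
    HitsDiscontinuity p := by
  obtain ⟨n, hn⟩ := h
  exact ⟨n + k, by rwa [Function.iterate_add_apply]⟩

lemma HitsDiscontinuity.neg {p : ℝ × ℝ} (h : HitsDiscontinuity p) : HitsDiscontinuity (-p) := by
  classical
  refine ⟨Nat.find h, ?_⟩
  rw [iterate_F_neg fun k hk => Nat.find_min h hk, Prod.snd_neg, Nat.find_spec h, neg_zero]

lemma iterate_four_F_of_le_one {x m : ℝ} (hx : x ≤ 1) (hm : 2 ≤ m) :
    F^[4] (x, m) = (x - 2, m - 2) := by
  simp (disch := grind) only [Function.iterate_succ, Function.comp_apply, Function.iterate_zero,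
    id, F_of_nonneg, F_of_neg]
  ext <;> ring

lemma iterate_four_F_of_one_lt_of_lt_two {x m : ℝ} (hx₁ : 1 < x) (hx₂ : x < 2) (hm : 0 ≤ m) :
    F^[4] (x, m) = (x - 2, m) := by
  simp (disch := grind) only [Function.iterate_succ, Function.comp_apply, Function.iterate_zero,
    id, F_of_nonneg, F_of_neg]
  ext <;> ring

lemma iterate_four_F_of_two_le {x m : ℝ} (hx : 2 ≤ x) (hm : 0 ≤ m) :
    F^[4] (x, m) = (x - 2, m + 2) := by
  simp (disch := grind) only [Function.iterate_succ, Function.comp_apply, Function.iterate_zero,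
    id, F_of_nonneg, F_of_neg]
  ext <;> ring

lemma hitsDiscontinuity_natCast_of_le_one (m : ℕ) :
    ∀ {x : ℝ}, x ≤ 1 → HitsDiscontinuity (x, m) := by
  induction m using Nat.twoStepInduction with
  | zero => exact fun _ => ⟨0, Nat.cast_zero⟩
  | one =>
    intro x hx
    refine ⟨2, ?_⟩
    simp (disch := grind) only [Function.iterate_succ, Function.comp_apply, Function.iterate_zero,
      id, Nat.cast_one, F_of_nonneg]
    ring
  | more m ih _ =>
    intro x hx
    refine .of_iterate 4 ?_
    rw [Nat.cast_add, Nat.cast_two,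
      iterate_four_F_of_le_one hx (le_add_of_nonneg_left m.cast_nonneg), add_sub_cancel_right]
    exact ih (by linarith)

lemma hitsDiscontinuity_natCast_of_le (k : ℕ) {x : ℝ} (hx : x ≤ 2 * k + 1) (m : ℕ) :
    HitsDiscontinuity (x, m) := by
  induction k generalizing x m with
  | zero => exact hitsDiscontinuity_natCast_of_le_one m (by simpa using hx)
  | succ k ih =>
    rcases le_or_gt x 1 with h₁ | h₁
    · exact hitsDiscontinuity_natCast_of_le_one m h₁
    refine .of_iterate 4 ?_
    rcases lt_or_ge x 2 with h₂ | h₂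
    · rw [iterate_four_F_of_one_lt_of_lt_two h₁ h₂ m.cast_nonneg]
      exact hitsDiscontinuity_natCast_of_le_one m (by linarith)
    · rw [iterate_four_F_of_two_le h₂ m.cast_nonneg]
      exact_mod_cast ih (by push_cast at hx; linarith) (m + 2)

lemma hitsDiscontinuity_natCast (x : ℝ) (m : ℕ) : HitsDiscontinuity (x, m) :=
  let ⟨k, hk⟩ := exists_nat_ge x
  hitsDiscontinuity_natCast_of_le k (by linarith) m

lemma hitsDiscontinuity_intCast (x : ℝ) (m : ℤ) : HitsDiscontinuity (x, m) := by
  obtain ⟨n, rfl | rfl⟩ := Int.eq_nat_or_neg m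
  · exact_mod_cast hitsDiscontinuity_natCast x n
  · simpa using (hitsDiscontinuity_natCast (-x) n).neg

lemma OnGrid.hitsDiscontinuity {x y : ℝ} (h : OnGrid (x, y)) : HitsDiscontinuity (x, y) := by
  rcases h with ⟨k, rfl : x = k⟩ | ⟨l, rfl : y = l⟩
  · obtain ⟨e, he⟩ := exists_intCast_eq_s y
    refine .of_iterate 1 ?_
    have hF : F^[1] (k, y) = (y, ((e - k : ℤ) : ℝ)) := by
      rw [Function.iterate_one, F, he, Int.cast_sub, neg_add_eq_sub]
    rw [hF]
    exact hitsDiscontinuity_intCast y _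
  · exact hitsDiscontinuity_intCast x l

/-- A point `(x,y)` has some iterate landing on the discontinuity line `{y = 0}`
iff `x ∈ ℤ` or `y ∈ ℤ`; hence the critical set of `F` is the integer grid. -/
theorem critical_set_pi_div_two (x y : ℝ) :
    (∃ n : ℕ, (F^[n] (x, y)).2 = 0) ↔
      (∃ k : ℤ, x = (k : ℝ)) ∨ (∃ ℓ : ℤ, y = (ℓ : ℝ)) :=
  ⟨HitsDiscontinuity.onGrid (p := (x, y)), OnGrid.hitsDiscontinuity⟩
end

section
/- Let F(x,y) = (y, -x + s(y)) and V(x,y) = max(|⌊x⌋ + ⌊y⌋ + 1| − 1, |⌊x⌋ − ⌊y⌋|). For every (x,y) ∈ ℝ² with x ∉ ℤ and y ∉ ℤ, we have V(F(x,y)) = V(x,y); that is, V is a first integral of F on the zero-free set U = {(x,y) : x ∉ ℤ and y ∉ ℤ}. -/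
noncomputable def V (q : ℝ × ℝ) : ℤ :=
  max (|⌊q.1⌋ + ⌊q.2⌋ + 1| - 1) |⌊q.1⌋ - ⌊q.2⌋|

lemma key_pos (a b : ℤ) (hb : 0 ≤ b) :
    max (|b + (-a) + 1| - 1) |b - (-a)| = max (|a + b + 1| - 1) |a - b| := by
  simp only [Int.abs_eq_natAbs, Int.max_def]
  omega

lemma key_neg (a b : ℤ) (hb : b < 0) :
    max (|b + (-a - 2) + 1| - 1) |b - (-a - 2)| = max (|a + b + 1| - 1) |a - b| := by
  simp only [Int.abs_eq_natAbs, Int.max_def]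
  omega

/-- `V` is a first integral of `F` on the zero-free set
`U = {(x,y) : x ∉ ℤ and y ∉ ℤ}`. -/
theorem V_first_integral_pi_div_two (x y : ℝ)
    (hx : ∀ k : ℤ, x ≠ (k : ℝ)) (hy : ∀ ℓ : ℤ, y ≠ (ℓ : ℝ)) :
    V (F (x, y)) = V (x, y) := by
  have hfloor : ⌊-x⌋ = -⌊x⌋ - 1 := by
    have h1 : (⌊x⌋ : ℝ) ≤ x := Int.floor_le x
    have h2 : x < ⌊x⌋ + 1 := Int.lt_floor_add_one x
    have h3 : (⌊x⌋ : ℝ) ≠ x := fun h => hx ⌊x⌋ h.symm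
    rw [Int.floor_eq_iff]
    constructor <;> push_cast <;> [linarith; linarith [h1.lt_of_ne h3]]
  simp only [V, F, s]
  split_ifs with h
  · have : ⌊-x + (1:ℝ)⌋ = -⌊x⌋ - 1 + 1 := by
      rw [show -x + (1:ℝ) = -x + (1:ℤ) by push_cast; ring, Int.floor_add_intCast, hfloor]
    rw [this]
    have hb : 0 ≤ ⌊y⌋ := Int.floor_nonneg.mpr h
    have := key_pos ⌊x⌋ ⌊y⌋ hb
    convert this using 3 <;> ring
  · have : ⌊-x + (-1:ℝ)⌋ = -⌊x⌋ - 1 + -1 := by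
      rw [show -x + (-1:ℝ) = -x + ((-1:ℤ):ℝ) by push_cast; ring, Int.floor_add_intCast, hfloor]
    rw [this]
    have hb : ⌊y⌋ < 0 := by
      by_contra hc
      exact h (le_trans (Int.cast_nonneg_iff.mpr (not_lt.mp hc)) (Int.floor_le y))
    have := key_neg ⌊x⌋ ⌊y⌋ hb
    convert this using 3 <;> ring
end

section
/- Let F(x,y) = (y, -x + s(y)). For all k,ℓ ∈ ℤ, the center p_{k,ℓ} = (k + 1/2, ℓ + 1/2) is a periodic point of F; moreover, setting c = max(|k+ℓ+1| − 1, |k−ℓ|), the minimal period of p_{k,ℓ} equals 2c+1 if c is even, and equals 4c+2 if c is odd. -/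
namespace CentersAux

open Function

/-- Integer model of `F` on tile centers: `(k,ℓ)` encodes `(k+1/2, ℓ+1/2)`. -/
def G2 : ℤ × ℤ → ℤ × ℤ := fun q => if 0 ≤ q.2 then (q.2, -q.1) else (q.2, -q.1 - 2)

/-- Model in coordinates `u = k+ℓ+1`, `v = k-ℓ`. -/
def Guv : ℤ × ℤ → ℤ × ℤ := fun q =>
  if q.2 < q.1 then (1 - q.2, q.1 - 1) else (-1 - q.2, q.1 + 1)

lemma Guv_lt (u v : ℤ) (h : v < u) : Guv (u, v) = (1 - v, u - 1) := by
  simp only [Guv]; rw [if_pos h]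

lemma Guv_ge (u v : ℤ) (h : u ≤ v) : Guv (u, v) = (-1 - v, u + 1) := by
  simp only [Guv]; rw [if_neg (by omega)]

/-- A custom "exact minimal period" lemma. -/
lemma minPeriod_eq {α : Type*} (f : α → α) (x : α) (n : ℕ) (h1 : 0 < n)
    (h2 : f^[n] x = x) (h3 : ∀ m : ℕ, 0 < m → m < n → f^[m] x ≠ x) :
    Function.minimalPeriod f x = n := by
  have hper : IsPeriodicPt f n x := h2
  have hle : minimalPeriod f x ≤ n := hper.minimalPeriod_le h1
  have hpos : 0 < minimalPeriod f x :=
    minimalPeriod_pos_of_mem_periodicPts ⟨n, h1, hper⟩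
  rcases lt_or_eq_of_le hle with h | h
  · exact absurd (isPeriodicPt_minimalPeriod f x) (h3 _ hpos h)
  · exact h

/-- Transfer of minimal period along an injective semiconjugacy. -/
lemma minimalPeriod_semiconj {α β : Type*} {e : α → β} {f : α → α} {g : β → β}
    (he : Function.Injective e) (hsc : ∀ a, g (e a) = e (f a)) (a : α) :
    Function.minimalPeriod g (e a) = Function.minimalPeriod f a := by
  have hsemi : Function.Semiconj e f g := fun x => (hsc x).symm
  have hit : ∀ (n : ℕ) (x : α), g^[n] (e x) = e (f^[n] x) := by
    intro n x
    exact ((hsemi.iterate_right n) x).symm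
  have hiff : ∀ n : ℕ, IsPeriodicPt g n (e a) ↔ IsPeriodicPt f n a := by
    intro n
    constructor
    · intro h
      have h' : g^[n] (e a) = e a := h
      rw [hit] at h'
      exact he h'
    · intro h
      have h' : f^[n] a = a := h
      show g^[n] (e a) = e a
      rw [hit, h']
  by_cases h : a ∈ periodicPts f
  · have hpos := minimalPeriod_pos_of_mem_periodicPts h
    apply minPeriod_eq g (e a) (minimalPeriod f a) hpos
    · exact (hiff _).mpr (isPeriodicPt_minimalPeriod f a)
    · intro m hm1 hm2 hh
      have h1 : IsPeriodicPt f m a := (hiff m).mp hh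
      have := h1.minimalPeriod_le hm1
      omega
  · have h1 : minimalPeriod f a = 0 := minimalPeriod_eq_zero_of_notMem_periodicPts h
    have h2 : e a ∉ periodicPts g := by
      rintro ⟨m, hm, hper⟩
      exact h ⟨m, hm, (hiff m).mp hper⟩
    rw [h1, minimalPeriod_eq_zero_of_notMem_periodicPts h2]

/-- Explicit orbit parametrization on the invariant "square" of level `c`. -/
def B (c j : ℤ) : ℤ × ℤ :=
  if j % 4 = 0 then (c + 1, c - j)
  else if j % 4 = 1 then (j - c, c)
  else if j % 4 = 2 then (-c - 1, j - c)
  else (c - j, -c)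

lemma Bfst (c j : ℤ) : (B c j).1 =
    if j % 4 = 0 then c + 1 else if j % 4 = 1 then j - c
    else if j % 4 = 2 then -c - 1 else c - j := by
  unfold B; split_ifs <;> rfl

lemma Bsnd (c j : ℤ) : (B c j).2 =
    if j % 4 = 0 then c - j else if j % 4 = 1 then c
    else if j % 4 = 2 then j - c else -c := by
  unfold B; split_ifs <;> rfl

lemma B0 (c j : ℤ) (h : j % 4 = 0) : B c j = (c + 1, c - j) := by
  unfold B; rw [if_pos h]

lemma B1 (c j : ℤ) (h : j % 4 = 1) : B c j = (j - c, c) := by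
  unfold B; rw [if_neg (by omega), if_pos h]

lemma B2 (c j : ℤ) (h : j % 4 = 2) : B c j = (-c - 1, j - c) := by
  unfold B; rw [if_neg (by omega), if_neg (by omega), if_pos h]

lemma B3 (c j : ℤ) (h : j % 4 = 3) : B c j = (c - j, -c) := by
  unfold B; rw [if_neg (by omega), if_neg (by omega), if_neg (by omega)]

lemma B_ne (c j : ℤ) : (B c j).1 ≠ (B c j).2 := by
  rw [Bfst, Bsnd]
  have h4 : j % 4 = 0 ∨ j % 4 = 1 ∨ j % 4 = 2 ∨ j % 4 = 3 := by omega
  split_ifs <;> omega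

lemma Gneg (q : ℤ × ℤ) (h : q.1 ≠ q.2) : Guv (-q) = -Guv q := by
  obtain ⟨u, v⟩ := q
  simp only [Prod.fst, Prod.snd] at h
  have hneg : -((u, v) : ℤ × ℤ) = (-u, -v) := by simp
  rcases lt_or_gt_of_ne h with hlt | hgt
  · rw [hneg, Guv_ge u v (by omega), Guv_lt (-u) (-v) (by omega)]
    simp only [Prod.neg_mk, Prod.mk.injEq]
    omega
  · rw [hneg, Guv_lt u v (by omega), Guv_ge (-u) (-v) (by omega)]
    simp only [Prod.neg_mk, Prod.mk.injEq]
    omega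

lemma step_lt (c j : ℤ) (h0 : 0 ≤ j) (hj : j ≤ 2 * c - 1) :
    Guv (B c j) = B c (j + 1) := by
  have h4 : j % 4 = 0 ∨ j % 4 = 1 ∨ j % 4 = 2 ∨ j % 4 = 3 := by omega
  rcases h4 with h | h | h | h
  · rw [B0 c j h, B1 c (j+1) (by omega), Guv_lt _ _ (by omega)]
    simp only [Prod.mk.injEq]; omega
  · rw [B1 c j h, B2 c (j+1) (by omega), Guv_ge _ _ (by omega)]
    simp only [Prod.mk.injEq]; omega
  · rw [B2 c j h, B3 c (j+1) (by omega), Guv_ge _ _ (by omega)]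
    simp only [Prod.mk.injEq]; omega
  · rw [B3 c j h, B0 c (j+1) (by omega), Guv_lt _ _ (by omega)]
    simp only [Prod.mk.injEq]; omega

lemma step_neg_lt (c j : ℤ) (h0 : 0 ≤ j) (hj : j ≤ 2 * c - 1) :
    Guv (-B c j) = -B c (j + 1) := by
  rw [Gneg _ (B_ne c j), step_lt c j h0 hj]

lemma wrap_even (c : ℤ) (hc0 : 0 ≤ c) (hc2 : c % 2 = 0) :
    Guv (B c (2 * c)) = B c 0 := by
  rw [B0 c (2*c) (by omega), B0 c 0 (by omega), Guv_lt _ _ (by omega)]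
  simp only [Prod.mk.injEq]; omega

lemma wrap_even_neg (c : ℤ) (hc0 : 0 ≤ c) (hc2 : c % 2 = 0) :
    Guv (-B c (2 * c)) = -B c 0 := by
  rw [Gneg _ (B_ne c (2*c)), wrap_even c hc0 hc2]

lemma wrap_odd (c : ℤ) (hc0 : 0 ≤ c) (hc2 : c % 2 = 1) :
    Guv (B c (2 * c)) = -B c 0 := by
  rw [B2 c (2*c) (by omega), B0 c 0 (by omega), Guv_ge _ _ (by omega)]
  simp only [Prod.neg_mk, Prod.mk.injEq]; omega

lemma wrap_odd_neg (c : ℤ) (hc0 : 0 ≤ c) (hc2 : c % 2 = 1) :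
    Guv (-B c (2 * c)) = B c 0 := by
  rw [Gneg _ (B_ne c (2*c)), wrap_odd c hc0 hc2, neg_neg]

lemma B_inj (c : ℤ) (hc1 : 1 ≤ c) {j j' : ℤ} (h0 : 0 ≤ j) (h1 : j ≤ 2 * c)
    (h0' : 0 ≤ j') (h1' : j' ≤ 2 * c) (h : B c j = B c j') : j = j' := by
  have e1 : (B c j).1 = (B c j').1 := by rw [h]
  have e2 : (B c j).2 = (B c j').2 := by rw [h]
  rw [Bfst c j, Bfst c j'] at e1
  rw [Bsnd c j, Bsnd c j'] at e2
  split_ifs at e1 e2 <;> omega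

lemma B_ne_negB (c : ℤ) (hc1 : 1 ≤ c) (hc2 : c % 2 = 1) {j j' : ℤ} (h0 : 0 ≤ j)
    (h1 : j ≤ 2 * c) (h0' : 0 ≤ j') (h1' : j' ≤ 2 * c) : B c j ≠ -B c j' := by
  intro h
  have e1 : (B c j).1 = -(B c j').1 := by rw [h, Prod.fst_neg]
  have e2 : (B c j).2 = -(B c j').2 := by rw [h, Prod.snd_neg]
  rw [Bfst c j, Bfst c j'] at e1
  rw [Bsnd c j, Bsnd c j'] at e2
  split_ifs at e1 e2 <;> omega

/-- helper modular arithmetic -/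
lemma emod_succ (a N : ℤ) (h : 1 < N) : (a + 1) % N = (a % N + 1) % N := by
  rw [Int.add_emod a 1 N, Int.emod_eq_of_lt (by norm_num) h]

lemma emod_add_self (j N : ℤ) : (j + N) % N = j % N := by
  rw [show j + N = j + N * 1 by ring, Int.add_mul_emod_self_left]

section EvenCase

lemma iter_even (c : ℤ) (hc0 : 1 ≤ c) (hc2 : c % 2 = 0) (j : ℤ) (hj0 : 0 ≤ j)
    (hj : j ≤ 2 * c) (n : ℕ) :
    Guv^[n] (B c j) = B c ((j + (n : ℤ)) % (2 * c + 1)) ∧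
    Guv^[n] (-B c j) = -B c ((j + (n : ℤ)) % (2 * c + 1)) := by
  induction n with
  | zero =>
    simp only [Nat.cast_zero, add_zero, Function.iterate_zero, id_eq]
    rw [Int.emod_eq_of_lt hj0 (by omega)]
    exact ⟨rfl, rfl⟩
  | succ n ih =>
    obtain ⟨ih1, ih2⟩ := ih
    have hN : (0 : ℤ) < 2 * c + 1 := by omega
    have hm0 : 0 ≤ (j + (n : ℤ)) % (2 * c + 1) := Int.emod_nonneg _ (by omega)
    have hmlt : (j + (n : ℤ)) % (2 * c + 1) < 2 * c + 1 := Int.emod_lt_of_pos _ hN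
    have hnext : (j + ((n + 1 : ℕ) : ℤ)) % (2 * c + 1)
        = ((j + (n : ℤ)) % (2 * c + 1) + 1) % (2 * c + 1) := by
      push_cast
      rw [show j + ((n : ℤ) + 1) = (j + (n : ℤ)) + 1 by ring]
      exact emod_succ _ _ (by omega)
    set m := (j + (n : ℤ)) % (2 * c + 1) with hmdef
    constructor
    · rw [Function.iterate_succ_apply', ih1, hnext]
      by_cases hcase : m = 2 * c
      · rw [hcase, wrap_even c (by omega) hc2, show (2 * c + 1) % (2 * c + 1) = 0 from Int.emod_self]
      · rw [step_lt c m hm0 (by omega), Int.emod_eq_of_lt (by omega) (by omega)]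
    · rw [Function.iterate_succ_apply', ih2, hnext]
      by_cases hcase : m = 2 * c
      · rw [hcase, wrap_even_neg c (by omega) hc2, show (2 * c + 1) % (2 * c + 1) = 0 from Int.emod_self]
      · rw [step_neg_lt c m hm0 (by omega), Int.emod_eq_of_lt (by omega) (by omega)]

lemma minper_even (c : ℤ) (hc1 : 1 ≤ c) (hc2 : c % 2 = 0) (j : ℤ) (h0 : 0 ≤ j)
    (h1 : j ≤ 2 * c) :
    minimalPeriod Guv (B c j) = (2 * c + 1).toNat ∧
    minimalPeriod Guv (-B c j) = (2 * c + 1).toNat := by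
  have hNc : (((2 * c + 1).toNat : ℤ)) = 2 * c + 1 := Int.toNat_of_nonneg (by omega)
  have hret : (j + (((2 * c + 1).toNat : ℕ) : ℤ)) % (2 * c + 1) = j := by
    rw [hNc, emod_add_self, Int.emod_eq_of_lt h0 (by omega)]
  have hne : ∀ m : ℕ, 0 < m → m < (2 * c + 1).toNat →
      (j + (m : ℤ)) % (2 * c + 1) ≠ j := by
    intro m hm1 hm2 hj'
    have heq : (j + (m : ℤ)) % (2 * c + 1) = j % (2 * c + 1) := by
      rw [hj', Int.emod_eq_of_lt h0 (by omega)]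
    have h' := Int.emod_eq_emod_iff_emod_sub_eq_zero.mp heq
    have hdvd : (2 * c + 1) ∣ (m : ℤ) := by
      have : (j + (m : ℤ) - j) = (m : ℤ) := by ring
      rw [this] at h'
      exact Int.dvd_of_emod_eq_zero h'
    have := Int.le_of_dvd (by exact_mod_cast hm1) hdvd
    omega
  have hb0 : ∀ m : ℕ, 0 ≤ (j + (m : ℤ)) % (2 * c + 1) :=
    fun m => Int.emod_nonneg _ (by omega)
  have hb1 : ∀ m : ℕ, (j + (m : ℤ)) % (2 * c + 1) ≤ 2 * c := by
    intro m
    have := Int.emod_lt_of_pos (j + (m : ℤ)) (show (0:ℤ) < 2 * c + 1 by omega)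
    omega
  constructor
  · apply minPeriod_eq _ _ _ (by omega)
    · rw [(iter_even c (by omega) hc2 j h0 h1 _).1, hret]
    · intro m hm1 hm2 hiter
      rw [(iter_even c (by omega) hc2 j h0 h1 m).1] at hiter
      exact hne m hm1 hm2 (B_inj c hc1 (hb0 m) (hb1 m) h0 h1 hiter)
  · apply minPeriod_eq _ _ _ (by omega)
    · rw [(iter_even c (by omega) hc2 j h0 h1 _).2, hret]
    · intro m hm1 hm2 hiter
      rw [(iter_even c (by omega) hc2 j h0 h1 m).2] at hiter
      exact hne m hm1 hm2 (B_inj c hc1 (hb0 m) (hb1 m) h0 h1 (neg_injective hiter))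

end EvenCase

section OddCase

/-- Full orbit for odd `c`: two mirror halves. -/
def Xo (c j : ℤ) : ℤ × ℤ := if j ≤ 2 * c then B c j else -B c (j - (2 * c + 1))

lemma step_odd (c : ℤ) (hc1 : 1 ≤ c) (hc2 : c % 2 = 1) (m : ℤ) (h0 : 0 ≤ m)
    (hm : m ≤ 4 * c + 1) :
    Guv (Xo c m) = Xo c ((m + 1) % (4 * c + 2)) := by
  unfold Xo
  rcases (by omega : m ≤ 2 * c - 1 ∨ m = 2 * c ∨ (2 * c + 1 ≤ m ∧ m ≤ 4 * c) ∨ m = 4 * c + 1)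
    with h | h | h | h
  · rw [if_pos (by omega), Int.emod_eq_of_lt (by omega) (by omega), if_pos (by omega)]
    exact step_lt c m h0 h
  · subst h
    rw [if_pos (by omega), Int.emod_eq_of_lt (by omega) (by omega), if_neg (by omega)]
    rw [wrap_odd c (by omega) hc2]
    norm_num
  · rw [if_neg (by omega), Int.emod_eq_of_lt (by omega) (by omega), if_neg (by omega)]
    rw [step_neg_lt c (m - (2 * c + 1)) (by omega) (by omega)]
    congr 1
    ring
  · subst h
    rw [if_neg (by omega), show (4 * c + 1 + 1) % (4 * c + 2) = 0 from by
      rw [show 4 * c + 1 + 1 = 4 * c + 2 by ring]; exact Int.emod_self,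
      if_pos (by omega)]
    rw [show 4 * c + 1 - (2 * c + 1) = 2 * c by ring]
    exact wrap_odd_neg c (by omega) hc2

lemma iter_odd (c : ℤ) (hc1 : 1 ≤ c) (hc2 : c % 2 = 1) (j : ℤ) (hj0 : 0 ≤ j)
    (hj : j ≤ 4 * c + 1) (n : ℕ) :
    Guv^[n] (Xo c j) = Xo c ((j + (n : ℤ)) % (4 * c + 2)) := by
  induction n with
  | zero =>
    simp only [Nat.cast_zero, add_zero, Function.iterate_zero, id_eq]
    rw [Int.emod_eq_of_lt hj0 (by omega)]
  | succ n ih =>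
    have hN : (0 : ℤ) < 4 * c + 2 := by omega
    have hm0 : 0 ≤ (j + (n : ℤ)) % (4 * c + 2) := Int.emod_nonneg _ (by omega)
    have hmlt : (j + (n : ℤ)) % (4 * c + 2) < 4 * c + 2 := Int.emod_lt_of_pos _ hN
    have hnext : (j + ((n + 1 : ℕ) : ℤ)) % (4 * c + 2)
        = ((j + (n : ℤ)) % (4 * c + 2) + 1) % (4 * c + 2) := by
      push_cast
      rw [show j + ((n : ℤ) + 1) = (j + (n : ℤ)) + 1 by ring]
      exact emod_succ _ _ (by omega)
    rw [Function.iterate_succ_apply', ih, hnext]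
    exact step_odd c hc1 hc2 _ hm0 (by omega)

lemma Xo_inj (c : ℤ) (hc1 : 1 ≤ c) (hc2 : c % 2 = 1) {j j' : ℤ} (h0 : 0 ≤ j)
    (h1 : j ≤ 4 * c + 1) (h0' : 0 ≤ j') (h1' : j' ≤ 4 * c + 1)
    (h : Xo c j = Xo c j') : j = j' := by
  unfold Xo at h
  split_ifs at h with ha hb hb
  · exact B_inj c hc1 h0 (by omega) h0' (by omega) h
  · exact absurd h (B_ne_negB c hc1 hc2 h0 (by omega) (by omega) (by omega))
  · exact absurd h.symm (B_ne_negB c hc1 hc2 h0' (by omega) (by omega) (by omega))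
  · have := B_inj c hc1 (j := j - (2*c+1)) (j' := j' - (2*c+1)) (by omega) (by omega)
      (by omega) (by omega) (neg_injective h)
    omega

lemma minper_odd (c : ℤ) (hc1 : 1 ≤ c) (hc2 : c % 2 = 1) (j : ℤ) (h0 : 0 ≤ j)
    (h1 : j ≤ 4 * c + 1) :
    minimalPeriod Guv (Xo c j) = (4 * c + 2).toNat := by
  have hNc : (((4 * c + 2).toNat : ℕ) : ℤ) = 4 * c + 2 := Int.toNat_of_nonneg (by omega)
  apply minPeriod_eq _ _ _ (by omega)
  · rw [iter_odd c hc1 hc2 j h0 h1 _, hNc, emod_add_self, Int.emod_eq_of_lt h0 (by omega)]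
  · intro m hm1 hm2 hiter
    rw [iter_odd c hc1 hc2 j h0 h1 m] at hiter
    have hb0 : 0 ≤ (j + (m : ℤ)) % (4 * c + 2) := Int.emod_nonneg _ (by omega)
    have hb1 : (j + (m : ℤ)) % (4 * c + 2) < 4 * c + 2 :=
      Int.emod_lt_of_pos _ (by omega)
    have hj' := Xo_inj c hc1 hc2 hb0 (by omega) h0 h1 hiter
    have heq : (j + (m : ℤ)) % (4 * c + 2) = j % (4 * c + 2) := by
      rw [hj', Int.emod_eq_of_lt h0 (by omega)]
    have h' := Int.emod_eq_emod_iff_emod_sub_eq_zero.mp heq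
    have hdvd : (4 * c + 2) ∣ (m : ℤ) := by
      have he : (j + (m : ℤ) - j) = (m : ℤ) := by ring
      rw [he] at h'
      exact Int.dvd_of_emod_eq_zero h'
    have := Int.le_of_dvd (by exact_mod_cast hm1) hdvd
    omega

end OddCase

/-- Coverage: every point of the level set is on the explicit orbit (up to sign). -/
lemma coverage (u v c : ℤ) (hpar : (u + v) % 2 = 1) (hc1 : 1 ≤ c)
    (hc : c = max (|u| - 1) |v|) :
    ∃ j, 0 ≤ j ∧ j ≤ 2 * c ∧ (B c j = (u, v) ∨ B c j = (-u, -v)) := by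
  have hmu : |u| - 1 ≤ c := hc ▸ le_max_left _ _
  have hmv : |v| ≤ c := hc ▸ le_max_right _ _
  have hchoice : c = |u| - 1 ∨ c = |v| := hc ▸ (max_choice _ _)
  have hu2 : -(c+1) ≤ u ∧ u ≤ c + 1 := abs_le.mp (by omega)
  have hv2 : -c ≤ v ∧ v ≤ c := abs_le.mp hmv
  by_cases hA : u = c + 1
  · -- right edge
    have hp4 : (c - v) % 4 = 0 ∨ (c - v) % 4 = 2 := by omega
    rcases hp4 with h | h
    · exact ⟨c - v, by omega, by omega, Or.inl (by
        rw [B0 c (c - v) h]; simp only [Prod.mk.injEq]; omega)⟩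
    · exact ⟨c - v, by omega, by omega, Or.inr (by
        rw [B2 c (c - v) h]; simp only [Prod.mk.injEq]; omega)⟩
  · by_cases hB : u = -(c + 1)
    · -- left edge
      have hp4 : (c + v) % 4 = 0 ∨ (c + v) % 4 = 2 := by omega
      rcases hp4 with h | h
      · exact ⟨c + v, by omega, by omega, Or.inr (by
          rw [B0 c (c + v) h]; simp only [Prod.mk.injEq]; omega)⟩
      · exact ⟨c + v, by omega, by omega, Or.inl (by
          rw [B2 c (c + v) h]; simp only [Prod.mk.injEq]; omega)⟩
    · -- then |u| ≤ c and |v| = c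
      have huc : -c ≤ u ∧ u ≤ c := by omega
      have hvc : v = c ∨ v = -c := by
        rcases hchoice with h | h
        · exfalso
          have : |u| = c + 1 := by omega
          rcases abs_eq (by omega : (0:ℤ) ≤ c + 1) |>.mp this with h' | h' <;> omega
        · rcases abs_eq (by omega : (0:ℤ) ≤ c) |>.mp h.symm with h' | h' <;> omega
      rcases hvc with h | h
      · -- top edge
        have hp4 : (u + c) % 4 = 1 ∨ (u + c) % 4 = 3 := by omega
        rcases hp4 with h4 | h4
        · exact ⟨u + c, by omega, by omega, Or.inl (by
            rw [B1 c (u + c) h4]; simp only [Prod.mk.injEq]; omega)⟩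
        · exact ⟨u + c, by omega, by omega, Or.inr (by
            rw [B3 c (u + c) h4]; simp only [Prod.mk.injEq]; omega)⟩
      · -- bottom edge
        have hp4 : (c - u) % 4 = 1 ∨ (c - u) % 4 = 3 := by omega
        rcases hp4 with h4 | h4
        · exact ⟨c - u, by omega, by omega, Or.inr (by
            rw [B1 c (c - u) h4]; simp only [Prod.mk.injEq]; omega)⟩
        · exact ⟨c - u, by omega, by omega, Or.inl (by
            rw [B3 c (c - u) h4]; simp only [Prod.mk.injEq]; omega)⟩

/-- Key result about the integer model. -/
lemma guv_key (u v : ℤ) (hpar : (u + v) % 2 = 1) (c : ℤ)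
    (hc : c = max (|u| - 1) |v|) :
    (c % 2 = 0 → minimalPeriod Guv (u, v) = (2 * c + 1).toNat) ∧
    (c % 2 = 1 → minimalPeriod Guv (u, v) = (4 * c + 2).toNat) := by
  have hmv : |v| ≤ c := hc ▸ le_max_right _ _
  have hc0 : 0 ≤ c := le_trans (abs_nonneg v) hmv
  by_cases hcz : c = 0
  · subst hcz
    have hv0 : v = 0 := by
      have := abs_le.mp hmv; omega
    have hmu : |u| - 1 ≤ 0 := hc ▸ le_max_left _ _
    have hu : u = 1 ∨ u = -1 := by
      have h1 := abs_nonneg u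
      have h2 : -1 ≤ u ∧ u ≤ 1 := abs_le.mp (by omega)
      omega
    have hfix : Guv (u, v) = (u, v) := by
      subst hv0
      rcases hu with h | h <;> subst h
      · rw [Guv_lt 1 0 (by omega)]; norm_num
      · rw [Guv_ge (-1) 0 (by omega)]; norm_num
    have hmp : minimalPeriod Guv (u, v) = 1 := by
      apply minPeriod_eq _ _ 1 one_pos
      · simpa using hfix
      · intro m hm1 hm2; omega
    constructor <;> intro hpar2 <;> rw [hmp] <;> omega
  · have hc1 : 1 ≤ c := by omega
    obtain ⟨j, hj0, hj1, hj⟩ := coverage u v c hpar hc1 hc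
    constructor
    · intro hc2
      rcases hj with h | h
      · rw [← h]
        exact (minper_even c hc1 hc2 j hj0 hj1).1
      · have : -B c j = (u, v) := by rw [h]; simp
        rw [← this]
        exact (minper_even c hc1 hc2 j hj0 hj1).2
    · intro hc2
      rcases hj with h | h
      · have hx : Xo c j = (u, v) := by rw [Xo, if_pos hj1, h]
        rw [← hx]
        exact minper_odd c hc1 hc2 j hj0 (by omega)
      · have hx : Xo c (j + (2 * c + 1)) = (u, v) := by
          rw [Xo, if_neg (by omega), show j + (2 * c + 1) - (2 * c + 1) = j by ring, h]
          simp
        rw [← hx]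
        exact minper_odd c hc1 hc2 (j + (2 * c + 1)) (by omega) (by omega)

/-- Embedding of the integer model into the plane. -/
noncomputable def emb : ℤ × ℤ → ℝ × ℝ := fun q => ((q.1 : ℝ) + 1/2, (q.2 : ℝ) + 1/2)

lemma emb_inj : Function.Injective emb := by
  intro a b h
  simp only [emb, Prod.mk.injEq] at h
  obtain ⟨h1, h2⟩ := h
  have h1' : (a.1 : ℝ) = b.1 := by linarith
  have h2' : (a.2 : ℝ) = b.2 := by linarith
  have : a.1 = b.1 := by exact_mod_cast h1'
  have : a.2 = b.2 := by exact_mod_cast h2'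
  exact Prod.ext (by assumption) (by assumption)

lemma emb_semiconj (q : ℤ × ℤ) : F (emb q) = emb (G2 q) := by
  obtain ⟨k, l⟩ := q
  rcases le_or_gt 0 l with h | h
  · have hl : (0:ℝ) ≤ (l:ℝ) + 1/2 := by
      have : (0:ℝ) ≤ (l:ℝ) := by exact_mod_cast h
      linarith
    have hs : s ((l:ℝ) + 1/2) = 1 := by simp only [s, if_pos hl]
    simp only [emb, G2, F, hs, if_pos h]
    simp only [Prod.mk.injEq]
    refine ⟨by trivial, ?_⟩
    push_cast
    ring
  · have hl : ¬ (0:ℝ) ≤ (l:ℝ) + 1/2 := by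
      have h2 : (l:ℝ) ≤ -1 := by exact_mod_cast (by omega : l ≤ (-1:ℤ))
      push_neg
      linarith
    have hs : s ((l:ℝ) + 1/2) = -1 := by simp only [s, if_neg hl]
    simp only [emb, G2, F, hs, if_neg (by omega : ¬ (0:ℤ) ≤ l)]
    simp only [Prod.mk.injEq]
    refine ⟨by trivial, ?_⟩
    push_cast
    ring

lemma phi_semiconj (q : ℤ × ℤ) :
    Guv (q.1 + q.2 + 1, q.1 - q.2) = ((G2 q).1 + (G2 q).2 + 1, (G2 q).1 - (G2 q).2) := by
  obtain ⟨k, l⟩ := q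
  rcases le_or_gt 0 l with h | h
  · simp only [G2, if_pos h]
    rw [Guv_lt _ _ (by omega)]
    simp only [Prod.mk.injEq]
    omega
  · simp only [G2, if_neg (by omega : ¬ (0:ℤ) ≤ l)]
    rw [Guv_ge _ _ (by omega)]
    simp only [Prod.mk.injEq]
    omega

end CentersAux

/-- Every tile center `p_{k,ℓ} = (k + 1/2, ℓ + 1/2)` is a periodic point of `F`,
with minimal period `2c+1` if `c` is even and `4c+2` if `c` is odd, where
`c = max (|k+ℓ+1| - 1) |k-ℓ|`. -/
theorem centers_periodic_pi_div_two (k ℓ : ℤ) :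
    let p : ℝ × ℝ := ((k : ℝ) + 1/2, (ℓ : ℝ) + 1/2)
    let c : ℤ := max (|k + ℓ + 1| - 1) |k - ℓ|
    (∃ n : ℕ, 1 ≤ n ∧ F^[n] p = p) ∧
    (Even c → (Function.minimalPeriod F p : ℤ) = 2 * c + 1) ∧
    (Odd c → (Function.minimalPeriod F p : ℤ) = 4 * c + 2) := by
  intro p c
  have hp : p = CentersAux.emb (k, ℓ) := rfl
  have h1 : Function.minimalPeriod F p = Function.minimalPeriod CentersAux.G2 (k, ℓ) := by
    rw [hp]
    exact CentersAux.minimalPeriod_semiconj CentersAux.emb_inj CentersAux.emb_semiconj (k, ℓ)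
  have h2 : Function.minimalPeriod CentersAux.Guv (k + ℓ + 1, k - ℓ)
      = Function.minimalPeriod CentersAux.G2 (k, ℓ) := by
    exact CentersAux.minimalPeriod_semiconj
      (e := fun q : ℤ × ℤ => (q.1 + q.2 + 1, q.1 - q.2))
      (by
        intro a b hab
        simp only [Prod.mk.injEq] at hab
        exact Prod.ext (by omega) (by omega))
      (fun q => CentersAux.phi_semiconj q) (k, ℓ)
  have hkey := CentersAux.guv_key (k + ℓ + 1) (k - ℓ) (by omega) c rfl
  have hmp : Function.minimalPeriod F p
      = Function.minimalPeriod CentersAux.Guv (k + ℓ + 1, k - ℓ) := by rw [h1, ← h2]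
  have hc0 : (0:ℤ) ≤ c := le_trans (abs_nonneg _) (le_max_right _ _)
  refine ⟨?_, ?_, ?_⟩
  · refine ⟨Function.minimalPeriod F p, ?_, Function.isPeriodicPt_minimalPeriod F p⟩
    rcases Int.emod_two_eq c with h | h
    · rw [hmp, hkey.1 h]; omega
    · rw [hmp, hkey.2 h]; omega
  · intro he
    rw [hmp, hkey.1 (Int.even_iff.mp he)]
    omega
  · intro ho
    rw [hmp, hkey.2 (Int.odd_iff.mp ho)]
    omega
end

section
/- Let F(x,y) = (y, -x + s(y)). Let (x,y) ∈ ℝ² with x ∉ ℤ and y ∉ ℤ, put k = ⌊x⌋, ℓ = ⌊y⌋, p = (k + 1/2, ℓ + 1/2), and c = max(|k+ℓ+1| − 1, |k−ℓ|). If c is even, then F^{2c+1}(x,y) = p + A((x,y) − p), where A(u,v) = (v, −u) (a rotation of order 4 about p); if c is odd, then F^{4c+2}(x,y) = 2p − (x,y) (a rotation of order 2 about p). In particular, if (x,y) ≠ p, then the minimal period of (x,y) under F is 8c+4. -/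
def G (z : ℤ × ℤ) : ℤ × ℤ := (z.2, if 0 ≤ z.2 then -z.1 else -z.1 - 2)

def cc (z : ℤ × ℤ) : ℤ :=
  max (((z.1 + z.2 + 1).natAbs : ℤ) - 1) ((z.1 - z.2).natAbs : ℤ)

def ψ (z : ℤ × ℤ) : ℤ :=
  if z.1 + z.2 + 1 = cc z + 1 then (z.1 - z.2) + cc z
  else if z.1 + z.2 + 1 = -(cc z + 1) then 4 * cc z + 2 + (cc z - (z.1 - z.2))
  else if z.1 - z.2 = cc z then 2 * cc z + 2 + (cc z - 1 - (z.1 + z.2 + 1))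
  else 6 * cc z + 4 + ((z.1 + z.2 + 1) + cc z - 1)

lemma cc_nonneg (z : ℤ × ℤ) : 0 ≤ cc z := le_max_of_le_right (Int.natCast_nonneg _)

lemma cc_bounds (z : ℤ × ℤ) :
    z.1 + z.2 + 1 ≤ cc z + 1 ∧ -(cc z + 1) ≤ z.1 + z.2 + 1 ∧
    z.1 - z.2 ≤ cc z ∧ -(cc z) ≤ z.1 - z.2 ∧
    (z.1 + z.2 + 1 = cc z + 1 ∨ z.1 + z.2 + 1 = -(cc z + 1) ∨
     z.1 - z.2 = cc z ∨ z.1 - z.2 = -(cc z)) := by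
  obtain ⟨k, l⟩ := z; simp only [cc]; omega

lemma cc_G (z : ℤ × ℤ) : cc (G z) = cc z := by
  obtain ⟨k, l⟩ := z
  simp only [cc, G]
  split_ifs with h <;> omega

lemma psi_range (z : ℤ × ℤ) : 0 ≤ ψ z ∧ ψ z < 8 * cc z + 4 := by
  have b := cc_bounds z
  simp only [ψ]
  generalize cc z = c at *
  split_ifs <;> omega

lemma psi_step (z : ℤ × ℤ) :
    ψ (G z) = ψ z + 2 * cc z ∨ ψ (G z) = ψ z + 2 * cc z - (8 * cc z + 4) := by
  obtain ⟨k, l⟩ := z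
  have b1 := cc_bounds (k, l)
  have hgc := cc_G (k, l)
  have b2 := cc_bounds (G (k, l))
  rw [hgc] at b2
  by_cases hl : 0 ≤ l
  · have hG : G (k, l) = (l, -k) := by simp [G, hl]
    rw [hG] at b2 ⊢
    simp only [ψ]
    rw [show cc (l, -k) = cc (k, l) by rw [← hG, hgc]]
    generalize cc (k, l) = c at *
    simp only at b1 b2
    split_ifs <;> omega
  · have hG : G (k, l) = (l, -k - 2) := by simp [G, hl]
    rw [hG] at b2 ⊢
    simp only [ψ]
    rw [show cc (l, -k - 2) = cc (k, l) by rw [← hG, hgc]]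
    generalize cc (k, l) = c at *
    simp only at b1 b2
    split_ifs <;> omega

lemma psi_inj (z w : ℤ × ℤ) (h1 : cc z = cc w) (h2 : ψ z = ψ w) : z = w := by
  obtain ⟨k, l⟩ := z; obtain ⟨k', l'⟩ := w
  have b1 := cc_bounds (k, l)
  have b2 := cc_bounds (k', l')
  simp only [ψ] at h2
  rw [← h1] at h2 b2
  generalize cc (k, l) = c at *
  simp only at b1 b2 h2
  split_ifs at h2 <;> (refine Prod.ext ?_ ?_ <;> simp only [] <;> omega)

lemma cc_iterG (z : ℤ × ℤ) (n : ℕ) : cc (G^[n] z) = cc z := by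
  induction n with
  | zero => rfl
  | succ n ih => rw [Function.iterate_succ_apply', cc_G, ih]

lemma psi_iterG (z : ℤ × ℤ) (n : ℕ) :
    (8 * cc z + 4) ∣ (ψ (G^[n] z) - (ψ z + 2 * (n : ℤ) * cc z)) := by
  induction n with
  | zero => simp
  | succ n ih =>
    have h := psi_step (G^[n] z)
    rw [cc_iterG] at h
    rw [Function.iterate_succ_apply']
    have h2 : (8 * cc z + 4) ∣ (ψ (G (G^[n] z)) - ψ (G^[n] z) - 2 * cc z) := by
      rcases h with h | h <;> rw [h] <;> [simp; exact ⟨-1, by ring⟩]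
    have h3 := dvd_add ih h2
    convert h3 using 1
    · rfl
    push_cast
    ring

lemma G_fix_of_dvd (z : ℤ × ℤ) (n : ℕ) (hd : (8 * cc z + 4) ∣ 2 * (n : ℤ) * cc z) :
    G^[n] z = z := by
  have h1 := psi_iterG z n
  have h2 := psi_range z
  have h3 := psi_range (G^[n] z)
  rw [cc_iterG] at h3
  have h4 : (8 * cc z + 4) ∣ (ψ (G^[n] z) - ψ z) := by
    have := dvd_add h1 hd
    convert this using 1; rfl; ring
  have h5 : ψ (G^[n] z) = ψ z := by
    have h6 := Int.eq_zero_of_abs_lt_dvd h4 (by rw [abs_lt]; omega)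
    omega
  exact psi_inj _ _ (cc_iterG z n) h5

lemma dvd_of_G_fix (z : ℤ × ℤ) (n : ℕ) (hf : G^[n] z = z) :
    (8 * cc z + 4) ∣ 2 * (n : ℤ) * cc z := by
  have h1 := psi_iterG z n
  rw [hf] at h1
  have : (8 * cc z + 4) ∣ -(2 * (n : ℤ) * cc z) := by convert h1 using 1; ring
  exact (dvd_neg).mp this

noncomputable def R (q : ℝ × ℝ) : ℝ × ℝ := (q.2, -q.1)

lemma R_four : R^[4] = id := by
  funext q
  show R (R (R (R q))) = q
  simp [R]

lemma R_iter_mod (n : ℕ) (q : ℝ × ℝ) : R^[n] q = R^[n % 4] q := by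
  conv_lhs => rw [← Nat.mod_add_div n 4]
  rw [Function.iterate_add_apply, Function.iterate_mul, R_four]
  simp

lemma F_step' (z : ℤ × ℤ) (a b : ℝ) (ha : |a| < 1/2) (hb : |b| < 1/2) :
    F (((z.1 : ℝ) + 1/2) + a, ((z.2 : ℝ) + 1/2) + b)
      = ((((G z).1 : ℝ) + 1/2) + b, (((G z).2 : ℝ) + 1/2) + (-a)) := by
  obtain ⟨k, l⟩ := z
  rw [abs_lt] at ha hb
  simp only [F, s, G]
  by_cases hl : (0 : ℤ) ≤ l
  · have h0 : (0:ℝ) ≤ (l:ℝ) + 1/2 + b := by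
      have : (0:ℝ) ≤ (l:ℝ) := by exact_mod_cast hl
      linarith [hb.1]
    rw [if_pos hl, if_pos h0]
    simp only [Prod.mk.injEq]
    constructor <;> push_cast <;> ring
  · have h0 : ¬ (0:ℝ) ≤ (l:ℝ) + 1/2 + b := by
      have h1 : (l:ℝ) ≤ -1 := by exact_mod_cast (by omega : l ≤ -1)
      push_neg
      linarith [hb.2]
    rw [if_neg hl, if_neg h0]
    simp only [Prod.mk.injEq]
    constructor <;> push_cast <;> ring

lemma master (x y : ℝ) (z : ℤ × ℤ)
    (hx : |x - ((z.1 : ℝ) + 1/2)| < 1/2) (hy : |y - ((z.2 : ℝ) + 1/2)| < 1/2) (n : ℕ) :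
    F^[n] (x, y)
      = ((((G^[n] z).1 : ℝ) + 1/2) + (R^[n] (x - ((z.1:ℝ)+1/2), y - ((z.2:ℝ)+1/2))).1,
         (((G^[n] z).2 : ℝ) + 1/2) + (R^[n] (x - ((z.1:ℝ)+1/2), y - ((z.2:ℝ)+1/2))).2)
      ∧ |(R^[n] (x - ((z.1:ℝ)+1/2), y - ((z.2:ℝ)+1/2))).1| < 1/2
      ∧ |(R^[n] (x - ((z.1:ℝ)+1/2), y - ((z.2:ℝ)+1/2))).2| < 1/2 := by
  induction n with
  | zero =>
    refine ⟨?_, hx, hy⟩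
    simp only [Function.iterate_zero, id_eq]
    exact Prod.ext (by ring) (by ring)
  | succ n ih =>
    obtain ⟨h1, h2, h3⟩ := ih
    rw [Function.iterate_succ_apply' F, h1, Function.iterate_succ_apply' G,
      Function.iterate_succ_apply' R]
    rw [F_step' (G^[n] z) _ _ h2 h3]
    exact ⟨rfl, h3, by rw [show (R (R^[n] (x - ((z.1:ℝ)+1/2), y - ((z.2:ℝ)+1/2)))).2
      = -(R^[n] (x - ((z.1:ℝ)+1/2), y - ((z.2:ℝ)+1/2))).1 from rfl, abs_neg]; exact h2⟩

lemma int_half_eq {a b : ℤ} {r t : ℝ} (hr : |r| < 1/2) (ht : |t| < 1/2)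
    (h : (a:ℝ) + 1/2 + r = (b:ℝ) + 1/2 + t) : a = b ∧ r = t := by
  rw [abs_lt] at hr ht
  have hab : ((a - b : ℤ) : ℝ) = t - r := by push_cast; linarith
  have h1 : |((a - b : ℤ) : ℝ)| < 1 := by
    rw [hab, abs_lt]; constructor <;> linarith
  have h2 : |a - b| < 1 := by exact_mod_cast h1
  have h3 : a = b := by rw [abs_lt] at h2; omega
  refine ⟨h3, ?_⟩
  rw [h3] at h
  linarith

lemma fix_components (x y : ℝ) (z : ℤ × ℤ)
    (hx : |x - ((z.1 : ℝ) + 1/2)| < 1/2) (hy : |y - ((z.2 : ℝ) + 1/2)| < 1/2) (n : ℕ)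
    (hf : F^[n] (x, y) = (x, y)) :
    G^[n] z = z ∧
    R^[n] (x - ((z.1:ℝ)+1/2), y - ((z.2:ℝ)+1/2)) = (x - ((z.1:ℝ)+1/2), y - ((z.2:ℝ)+1/2)) := by
  obtain ⟨h1, h2, h3⟩ := master x y z hx hy n
  rw [hf] at h1
  have e1 := congrArg Prod.fst h1
  have e2 := congrArg Prod.snd h1
  simp only at e1 e2
  have c1 := int_half_eq h2 hx (by rw [← e1]; ring)
  have c2 := int_half_eq h3 hy (by rw [← e2]; ring)
  constructor
  · exact Prod.ext c1.1 c2.1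
  · exact Prod.ext c1.2 c2.2

/-- On a tile `T_{k,ℓ}` (i.e. for `x,y ∉ ℤ`, with `k = ⌊x⌋`, `ℓ = ⌊y⌋`), setting
`p = (k + 1/2, ℓ + 1/2)` and `c = max (|k+ℓ+1| - 1) |k-ℓ|`:
if `c` is even then `F^{2c+1}` is the rotation of order 4
`q ↦ p + A(q - p)`, `A(u,v) = (v,-u)`; if `c` is odd then `F^{4c+2}` is the
rotation of order 2 `q ↦ 2p - q`.  In particular every point of the tile other
than the center `p` has minimal period `8c+4`. -/
theorem tile_rotation_pi_div_two (x y : ℝ)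
    (hx : ∀ a : ℤ, x ≠ (a : ℝ)) (hy : ∀ b : ℤ, y ≠ (b : ℝ)) :
    let k : ℤ := ⌊x⌋
    let ℓ : ℤ := ⌊y⌋
    let p : ℝ × ℝ := ((k : ℝ) + 1/2, (ℓ : ℝ) + 1/2)
    let c : ℤ := max (|k + ℓ + 1| - 1) |k - ℓ|
    (Even c → F^[2 * c.toNat + 1] (x, y) = (p.1 + (y - p.2), p.2 - (x - p.1))) ∧
    (Odd c → F^[4 * c.toNat + 2] (x, y) = (2 * p.1 - x, 2 * p.2 - y)) ∧
    ((x, y) ≠ p → Function.minimalPeriod F (x, y) = 8 * c.toNat + 4) := by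
  intro k ℓ p c
  have hc0 : 0 ≤ c := le_max_of_le_right (abs_nonneg _)
  have hct : (c.toNat : ℤ) = c := Int.toNat_of_nonneg hc0
  have hcc : cc (k, ℓ) = c := by
    simp only [cc, Int.natCast_natAbs]
    rfl
  have hp1 : p.1 = (k:ℝ) + 1/2 := rfl
  have hp2 : p.2 = (ℓ:ℝ) + 1/2 := rfl
  have hxu : |x - ((k:ℝ) + 1/2)| < 1/2 := by
    have h1 : (k:ℝ) ≤ x := Int.floor_le x
    have h2 : x ≠ (k:ℝ) := hx k
    have h3 : x < (k:ℝ) + 1 := Int.lt_floor_add_one x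
    have h4 : (k:ℝ) < x := h1.lt_of_ne fun h => h2 h.symm
    rw [abs_lt]; constructor <;> linarith
  have hyv : |y - ((ℓ:ℝ) + 1/2)| < 1/2 := by
    have h1 : (ℓ:ℝ) ≤ y := Int.floor_le y
    have h2 : y ≠ (ℓ:ℝ) := hy ℓ
    have h3 : y < (ℓ:ℝ) + 1 := Int.lt_floor_add_one y
    have h4 : (ℓ:ℝ) < y := h1.lt_of_ne fun h => h2 h.symm
    rw [abs_lt]; constructor <;> linarith
  refine ⟨?_, ?_, ?_⟩
  · -- c even
    intro hce
    obtain ⟨d, hd⟩ := hce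
    have hfix : G^[2 * c.toNat + 1] (k, ℓ) = (k, ℓ) := by
      apply G_fix_of_dvd
      rw [hcc]
      refine ⟨d, ?_⟩
      push_cast [hct]
      rw [hd]; ring
    have hmod : (2 * c.toNat + 1) % 4 = 1 := by omega
    have E := (master x y (k, ℓ) hxu hyv (2 * c.toNat + 1)).1
    rw [hfix, R_iter_mod, hmod, Function.iterate_one] at E
    rw [E, hp1, hp2]
    simp only [R]
    exact Prod.ext (by ring) (by ring)
  · -- c odd
    intro hco
    obtain ⟨d, hd⟩ := hco
    have hfix : G^[4 * c.toNat + 2] (k, ℓ) = (k, ℓ) := by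
      apply G_fix_of_dvd
      rw [hcc]
      refine ⟨c, ?_⟩
      push_cast [hct]
      ring
    have hmod : (4 * c.toNat + 2) % 4 = 2 := by omega
    have E := (master x y (k, ℓ) hxu hyv (4 * c.toNat + 2)).1
    rw [hfix, R_iter_mod, hmod] at E
    have hR2 : ∀ q : ℝ × ℝ, R^[2] q = (-q.1, -q.2) := fun q => rfl
    rw [hR2] at E
    rw [E, hp1, hp2]
    exact Prod.ext (by simp; ring) (by simp; ring)
  · -- minimal period
    intro hne
    have hfixN : G^[8 * c.toNat + 4] (k, ℓ) = (k, ℓ) := by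
      apply G_fix_of_dvd
      rw [hcc]
      refine ⟨2 * c, ?_⟩
      push_cast [hct]
      ring
    have hmodN : (8 * c.toNat + 4) % 4 = 0 := by omega
    have EN := (master x y (k, ℓ) hxu hyv (8 * c.toNat + 4)).1
    rw [hfixN, R_iter_mod, hmodN, Function.iterate_zero, id_eq] at EN
    have hper : Function.IsPeriodicPt F (8 * c.toNat + 4) (x, y) := by
      show F^[8 * c.toNat + 4] (x, y) = (x, y)
      rw [EN]
      exact Prod.ext (by simp) (by simp)
    have hNpos : 0 < 8 * c.toNat + 4 := by omega
    have hle : Function.minimalPeriod F (x, y) ≤ 8 * c.toNat + 4 :=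
      hper.minimalPeriod_le hNpos
    have hpos : 0 < Function.minimalPeriod F (x, y) := hper.minimalPeriod_pos hNpos
    set m := Function.minimalPeriod F (x, y) with hm
    have hmfix : F^[m] (x, y) = (x, y) := Function.iterate_minimalPeriod
    obtain ⟨hG, hR⟩ := fix_components x y (k, ℓ) hxu hyv m hmfix
    have huv : ¬(x - ((k:ℝ)+1/2) = 0 ∧ y - ((ℓ:ℝ)+1/2) = 0) := by
      rintro ⟨h1, h2⟩
      apply hne
      refine Prod.ext ?_ ?_
      · rw [hp1]; dsimp only; linarith
      · rw [hp2]; dsimp only; linarith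
    rw [R_iter_mod] at hR
    have h4 : m % 4 = 0 := by
      have hr : m % 4 = 0 ∨ m % 4 = 1 ∨ m % 4 = 2 ∨ m % 4 = 3 := by omega
      rcases hr with h | h | h | h
      · exact h
      all_goals {
        rw [h] at hR
        exfalso
        apply huv
        have e1 := congrArg Prod.fst hR
        have e2 := congrArg Prod.snd hR
        simp only [Function.iterate_one, R, Function.iterate_succ, Function.iterate_zero,
          Function.comp_apply, id_eq] at e1 e2
        constructor <;> linarith }
    obtain ⟨m', hm'⟩ : 4 ∣ m := by omega
    have hdvd := dvd_of_G_fix (k, ℓ) m hG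
    rw [hcc] at hdvd
    have hstep1 : (4:ℤ) * ((2*c+1)) ∣ 4 * (2*(m':ℤ)*c) := by
      convert hdvd using 1
      · ring
      · push_cast [hm']; ring
    have h9 : (2*c+1:ℤ) ∣ 2*(m':ℤ)*c :=
      (mul_dvd_mul_iff_left (by norm_num : (4:ℤ) ≠ 0)).mp hstep1
    have h10 : (2*c+1:ℤ) ∣ (m':ℤ) * (2*c+1) := dvd_mul_left _ _
    have h11 : (2*c+1:ℤ) ∣ (m':ℤ) := by
      have := dvd_sub h10 h9
      convert this using 1; rfl; ring
    have hm'pos : 0 < m' := by omega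
    have h12 : (2*c+1:ℤ) ≤ (m':ℤ) := Int.le_of_dvd (by exact_mod_cast hm'pos) h11
    omega
end

section
/- Let F(x,y) = (y, -x + s(y)). If two points (x₁,y₁) and (x₂,y₂) belong to the same open tile T_{k,ℓ} = (k,k+1) × (ℓ,ℓ+1) for some k,ℓ ∈ ℤ, then for every n ∈ ℕ the second coordinate of Fⁿ(x₁,y₁) is ≥ 0 if and only if the second coordinate of Fⁿ(x₂,y₂) is ≥ 0 (all points of a tile have the same itinerary of every length). -/
/-! Since `s` is constant on each open row `(ℓ, ℓ+1)` and `F` is then a translate of the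
rotation `(x, y) ↦ (y, -x)`, which permutes the integer lattice, `F` maps every open tile
into a single open tile. By induction so does `Fⁿ`, and the sign of `y` is constant on a tile. -/

open Set

def tile (k ℓ : ℤ) : Set (ℝ × ℝ) := Ioo (k : ℝ) (k + 1) ×ˢ Ioo (ℓ : ℝ) (ℓ + 1)

lemma nonneg_iff_of_mem_Ioo_int {b : ℤ} {y : ℝ} (hy : y ∈ Ioo (b : ℝ) (b + 1)) :
    0 ≤ y ↔ 0 ≤ b := by
  constructor
  · intro h
    have : (-1 : ℝ) < b := by linarith [hy.2]
    exact_mod_cast Int.lt_iff_add_one_le.mp (by exact_mod_cast this : (-1 : ℤ) < b)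
  · intro h
    exact (Int.cast_nonneg_iff.mpr h).trans hy.1.le

lemma s_eq_of_mem_Ioo_int {b : ℤ} {y : ℝ} (hy : y ∈ Ioo (b : ℝ) (b + 1)) :
    s y = ((if 0 ≤ b then 1 else -1 : ℤ) : ℝ) := by
  simp only [s, nonneg_iff_of_mem_Ioo_int hy]
  split_ifs <;> norm_num

lemma mapsTo_F_tile (a b : ℤ) :
    MapsTo F (tile a b) (tile b (-a - 1 + if 0 ≤ b then 1 else -1)) := by
  rintro ⟨x, y⟩ ⟨hx, hy⟩
  refine ⟨hy, ?_⟩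
  simp only [F, s_eq_of_mem_Ioo_int hy]
  push_cast
  constructor <;> linarith [hx.1, hx.2]

lemma exists_mapsTo_iterate_F_tile (k ℓ : ℤ) (n : ℕ) :
    ∃ a b : ℤ, MapsTo F^[n] (tile k ℓ) (tile a b) := by
  induction n with
  | zero => exact ⟨k, ℓ, mapsTo_id _⟩
  | succ n ih =>
    obtain ⟨a, b, h⟩ := ih
    exact ⟨_, _, Function.iterate_succ' F n ▸ (mapsTo_F_tile a b).comp h⟩

/-- All points of an open tile `T_{k,ℓ} = (k,k+1) × (ℓ,ℓ+1)` have the same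
itinerary of every length. -/
theorem same_itinerary_on_tiles (k ℓ : ℤ) (x₁ y₁ x₂ y₂ : ℝ)
    (h₁ : (x₁, y₁) ∈ Set.Ioo ((k : ℝ)) ((k : ℝ) + 1) ×ˢ Set.Ioo ((ℓ : ℝ)) ((ℓ : ℝ) + 1))
    (h₂ : (x₂, y₂) ∈ Set.Ioo ((k : ℝ)) ((k : ℝ) + 1) ×ˢ Set.Ioo ((ℓ : ℝ)) ((ℓ : ℝ) + 1)) :
    ∀ n : ℕ, (0 ≤ (F^[n] (x₁, y₁)).2 ↔ 0 ≤ (F^[n] (x₂, y₂)).2) := by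
  intro n
  obtain ⟨a, b, hmaps⟩ := exists_mapsTo_iterate_F_tile k ℓ n
  rw [nonneg_iff_of_mem_Ioo_int (hmaps h₁).2, nonneg_iff_of_mem_Ioo_int (hmaps h₂).2]
end

section
/- Let F(x,y) = (y, -x + s(y)). Every point (x,y) ∈ ℝ² with x ∈ ℤ or y ∈ ℤ (i.e. every point of the critical set, the integer grid) is a periodic point of F whose minimal period is of the form 8n+4 for some n ∈ ℕ₀. -/
lemma Fpos (x y : ℝ) (h : 0 ≤ y) : F (x, y) = (y, -x + 1) := by
  simp [F, s, if_pos h]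
lemma Fneg (x y : ℝ) (h : y < 0) : F (x, y) = (y, -x - 1) := by
  simp [F, s, if_neg (not_le.2 h)]; ring
lemma it4 (z : ℝ × ℝ) : F^[4] z = F (F (F (F z))) := rfl

lemma MA (x y : ℝ) (hy : 0 ≤ y) (hx : 2 ≤ x) : F^[4] (x, y) = (x - 2, y + 2) := by
  rw [it4, Fpos x y hy, Fneg y (-x+1) (by linarith), Fneg (-x+1) (-y-1) (by linarith),
    Fpos (-y-1) (-(-x+1)-1) (by linarith)]
  simp only [Prod.mk.injEq]; constructor <;> ring

lemma MB (x y : ℝ) (hx : x ≤ 1) (hy : 2 ≤ y) : F^[4] (x, y) = (x - 2, y - 2) := by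
  rw [it4, Fpos x y (by linarith), Fpos y (-x+1) (by linarith), Fneg (-x+1) (-y+1) (by linarith),
    Fneg (-y+1) (-(-x+1)-1) (by linarith)]
  simp only [Prod.mk.injEq]; constructor <;> ring

lemma MC (x : ℝ) (hx : x < 0) : F^[4] (x, 0) = (x, -2) := by
  rw [it4, Fpos x 0 le_rfl, Fpos 0 (-x+1) (by linarith), Fpos (-x+1) (-0+1) (by linarith),
    Fneg (-0+1) (-(-x+1)+1) (by linarith)]
  simp only [Prod.mk.injEq]; constructor <;> ring

lemma MD (x y : ℝ) (hy : y < 0) (hx : x < -2) : F^[4] (x, y) = (x + 2, y - 2) := by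
  rw [it4, Fneg x y hy, Fpos y (-x-1) (by linarith), Fpos (-x-1) (-y+1) (by linarith),
    Fneg (-y+1) (-(-x-1)+1) (by linarith)]
  simp only [Prod.mk.injEq]; constructor <;> ring

lemma ME (x y : ℝ) (hy : y < 0) (hx1 : -2 ≤ x) (hx2 : x ≤ -1) : F^[4] (x, y) = (x + 2, y) := by
  rw [it4, Fneg x y hy, Fpos y (-x-1) (by linarith), Fpos (-x-1) (-y+1) (by linarith),
    Fpos (-y+1) (-(-x-1)+1) (by linarith)]
  simp only [Prod.mk.injEq]; constructor <;> ring

lemma MG (x y : ℝ) (hy : y ≤ -1) (hx : -1 < x) : F^[4] (x, y) = (x + 2, y + 2) := by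
  rw [it4, Fneg x y (by linarith), Fneg y (-x-1) (by linarith), Fpos (-x-1) (-y-1) (by linarith),
    Fpos (-y-1) (-(-x-1)+1) (by linarith)]
  simp only [Prod.mk.injEq]; constructor <;> ring

lemma MH (x y : ℝ) (hy : 0 ≤ y) (hx1 : 1 < x) (hx2 : x < 2) : F^[4] (x, y) = (x - 2, y) := by
  rw [it4, Fpos x y hy, Fneg y (-x+1) (by linarith), Fneg (-x+1) (-y-1) (by linarith),
    Fneg (-y-1) (-(-x+1)-1) (by linarith)]
  simp only [Prod.mk.injEq]; constructor <;> ring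

lemma M0 (t : ℝ) (h0 : 0 ≤ t) (h1 : t ≤ 1) : F^[4] (t, 0) = (t, 0) := by
  rw [it4, Fpos t 0 le_rfl, Fpos 0 (-t+1) (by linarith), Fpos (-t+1) (-0+1) (by linarith),
    Fpos (-0+1) (-(-t+1)+1) (by linarith)]
  simp only [Prod.mk.injEq]; constructor <;> ring

open Function

lemma RunA (k : ℕ) : ∀ x y : ℝ, 0 ≤ y → 2*(k:ℝ) ≤ x →
    F^[4*k] (x, y) = (x - 2*k, y + 2*k) := by
  induction k with
  | zero => intro x y _ _; simp
  | succ n ih =>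
    intro x y hy hx
    push_cast at hx
    rw [show 4*(n+1) = 4*n + 4 by ring, Function.iterate_add_apply,
      MA x y hy (by linarith), ih (x-2) (y+2) (by linarith) (by push_cast; linarith)]
    simp only [Prod.mk.injEq]; push_cast; constructor <;> ring

lemma RunB (k : ℕ) : ∀ x y : ℝ, x ≤ 1 → 2*(k:ℝ) ≤ y →
    F^[4*k] (x, y) = (x - 2*k, y - 2*k) := by
  induction k with
  | zero => intro x y _ _; simp
  | succ n ih =>
    intro x y hx hy
    push_cast at hy
    rw [show 4*(n+1) = 4*n + 4 by ring, Function.iterate_add_apply,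
      MB x y hx (by linarith), ih (x-2) (y-2) (by linarith) (by push_cast; linarith)]
    simp only [Prod.mk.injEq]; push_cast; constructor <;> ring

lemma RunD (k : ℕ) : ∀ x y : ℝ, y < 0 → x + 2*(k:ℝ) < 0 →
    F^[4*k] (x, y) = (x + 2*k, y - 2*k) := by
  induction k with
  | zero => intro x y _ _; simp
  | succ n ih =>
    intro x y hy hx
    push_cast at hx
    have hn : (0:ℝ) ≤ n := Nat.cast_nonneg n
    rw [show 4*(n+1) = 4*n + 4 by ring, Function.iterate_add_apply,
      MD x y hy (by linarith), ih (x+2) (y-2) (by linarith) (by push_cast; linarith)]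
    simp only [Prod.mk.injEq]; push_cast; constructor <;> ring

lemma RunG (k : ℕ) : ∀ x y : ℝ, -1 < x → y + 2*(k:ℝ) ≤ 1 →
    F^[4*k] (x, y) = (x + 2*k, y + 2*k) := by
  induction k with
  | zero => intro x y _ _; simp
  | succ n ih =>
    intro x y hx hy
    push_cast at hy
    have hn : (0:ℝ) ≤ n := Nat.cast_nonneg n
    rw [show 4*(n+1) = 4*n + 4 by ring, Function.iterate_add_apply,
      MG x y (by linarith) hx, ih (x+2) (y+2) (by linarith) (by push_cast; linarith)]
    simp only [Prod.mk.injEq]; push_cast; constructor <;> ring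

lemma chain {a b : ℕ} {z w v : ℝ × ℝ} (h1 : F^[a] z = w) (h2 : F^[b] w = v) :
    F^[b + a] z = v := by rw [Function.iterate_add_apply, h1, h2]

lemma periodE (m' : ℕ) (g : ℝ) (hg0 : 0 ≤ g) (hg1 : g ≤ 1) :
    F^[4*(4*m'+5)] (2*((m':ℝ)+1) + g, 0) = (2*((m':ℝ)+1) + g, 0) := by
  set m : ℕ := m' + 1 with hm
  have hmr : ((m:ℝ)) = (m':ℝ) + 1 := by rw [hm]; push_cast; ring
  have h1 : F^[4*m] (2*((m':ℝ)+1) + g, 0) = (g, 2*(m:ℝ)) := by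
    have := RunA m (2*((m':ℝ)+1) + g) 0 le_rfl (by rw [hmr]; linarith)
    rw [this]; rw [hmr]; simp only [Prod.mk.injEq]; constructor <;> ring
  have h2 : F^[4*m] ((g : ℝ), 2*(m:ℝ)) = (g - 2*m, 0) := by
    have := RunB m g (2*(m:ℝ)) (by linarith) (by linarith)
    rw [this]; simp only [Prod.mk.injEq]; exact ⟨trivial, by ring⟩
  have h3 : F^[4] ((g - 2*(m:ℝ)), 0) = (g - 2*m, -2) := by
    apply MC; rw [hmr]; push_cast; linarith
  have h4 : F^[4*m'] ((g - 2*(m:ℝ)), -2) = (g - 2, -2 - 2*(m':ℝ)) := by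
    have := RunD m' (g - 2*(m:ℝ)) (-2) (by norm_num) (by rw [hmr]; linarith)
    rw [this]; rw [hmr]; simp only [Prod.mk.injEq]; exact ⟨by ring, trivial⟩
  have h5 : F^[4] ((g - 2 : ℝ), -2 - 2*(m':ℝ)) = (g, -2 - 2*(m':ℝ)) := by
    have := ME (g-2) (-2 - 2*(m':ℝ)) (by have : (0:ℝ) ≤ m' := Nat.cast_nonneg m'; linarith)
      (by linarith) (by linarith)
    rw [this]; simp only [Prod.mk.injEq]; exact ⟨by ring, trivial⟩
  have h6 : F^[4*m] ((g:ℝ), -2 - 2*(m':ℝ)) = (2*((m':ℝ)+1) + g, 0) := by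
    have := RunG m g (-2 - 2*(m':ℝ)) (by linarith) (by rw [hmr]; linarith)
    rw [this]; rw [hmr]; simp only [Prod.mk.injEq]; constructor <;> ring
  have := chain (chain (chain (chain (chain h1 h2) h3) h4) h5) h6
  rw [show 4*m + (4 + (4*m' + (4 + (4*m + 4*m)))) = 4*(4*m'+5) by rw [hm]; ring] at this
  exact this

lemma periodO (m : ℕ) (g : ℝ) (hg0 : 0 < g) (hg1 : g < 1) :
    F^[4*(4*m+3)] (2*(m:ℝ)+1 + g, 0) = (2*(m:ℝ)+1 + g, 0) := by
  have hm0 : (0:ℝ) ≤ m := Nat.cast_nonneg m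
  have h1 : F^[4*m] (2*(m:ℝ)+1 + g, 0) = (1 + g, 2*(m:ℝ)) := by
    have := RunA m (2*(m:ℝ)+1+g) 0 le_rfl (by linarith)
    rw [this]; simp only [Prod.mk.injEq]; constructor <;> ring
  have h2 : F^[4] ((1 + g : ℝ), 2*(m:ℝ)) = (g - 1, 2*(m:ℝ)) := by
    have := MH (1+g) (2*(m:ℝ)) (by linarith) (by linarith) (by linarith)
    rw [this]; simp only [Prod.mk.injEq]; exact ⟨by ring, trivial⟩
  have h3 : F^[4*m] ((g - 1 : ℝ), 2*(m:ℝ)) = (g - 1 - 2*m, 0) := by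
    have := RunB m (g-1) (2*(m:ℝ)) (by linarith) (by linarith)
    rw [this]; simp only [Prod.mk.injEq]; exact ⟨trivial, by ring⟩
  have h4 : F^[4] ((g - 1 - 2*(m:ℝ)), 0) = (g - 1 - 2*m, -2) := MC _ (by linarith)
  have h5 : F^[4*m] ((g - 1 - 2*(m:ℝ)), -2) = (g - 1, -2 - 2*(m:ℝ)) := by
    have := RunD m (g - 1 - 2*(m:ℝ)) (-2) (by norm_num) (by linarith)
    rw [this]; simp only [Prod.mk.injEq]; exact ⟨by ring, trivial⟩
  have h6 : F^[4*(m+1)] ((g - 1 : ℝ), -2 - 2*(m:ℝ)) = (2*(m:ℝ)+1 + g, 0) := by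
    have := RunG (m+1) (g-1) (-2 - 2*(m:ℝ)) (by linarith) (by push_cast; linarith)
    rw [this]; push_cast; simp only [Prod.mk.injEq]; constructor <;> ring
  have := chain (chain (chain (chain (chain h1 h2) h3) h4) h5) h6
  rw [show 4*(m+1) + (4*m + (4 + (4*m + (4 + 4*m)))) = 4*(4*m+3) by ring] at this
  exact this

lemma periodAxis (t : ℝ) (ht : 0 ≤ t) : ∃ N : ℕ, F^[4*(2*N+1)] (t, 0) = (t, 0) := by
  by_cases h1 : t ≤ 1
  · exact ⟨0, M0 t ht h1⟩
  push_neg at h1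
  set j : ℤ := ⌊t⌋ with hj
  have hj1 : (1:ℤ) ≤ j := by
    rw [hj]; exact Int.le_floor.2 (by exact_mod_cast h1.le)
  set m0 : ℕ := j.toNat with hm0
  have hm0r : ((m0:ℝ)) = (j:ℝ) := by
    have h' : ((j.toNat : ℤ)) = j := Int.toNat_of_nonneg (by linarith)
    rw [hm0]
    exact_mod_cast congrArg (Int.cast : ℤ → ℝ) h'
  have hfl : ((m0:ℝ)) ≤ t := by rw [hm0r]; exact Int.floor_le t
  have hfu : t < (m0:ℝ) + 1 := by rw [hm0r]; exact Int.lt_floor_add_one t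
  have hm01 : 1 ≤ m0 := by omega
  rcases Nat.even_or_odd m0 with ⟨c, hc⟩ | ⟨c, hc⟩
  · -- m0 = 2c, c ≥ 1
    have hc1 : 1 ≤ c := by omega
    obtain ⟨c', rfl⟩ : ∃ c', c = c' + 1 := ⟨c - 1, by omega⟩
    refine ⟨2*(c'+1), ?_⟩
    have hE := periodE c' (t - 2*((c':ℝ)+1)) (by push_cast [hc] at hfl ⊢; linarith)
      (by push_cast [hc] at hfu ⊢; linarith)
    rw [show 2*((c':ℝ)+1) + (t - 2*((c':ℝ)+1)) = t by ring] at hE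
    rw [show 4*(2*(2*(c'+1))+1) = 4*(4*c'+5) by ring]
    exact hE
  · -- m0 = 2c+1
    by_cases hgz : (m0:ℝ) = t
    · -- t = 2c+1 odd integer, c ≥ 1
      have hc1 : 1 ≤ c := by
        by_contra hcc
        have : c = 0 := by omega
        have hm1 : m0 = 1 := by omega
        rw [hm1] at hgz
        norm_num at hgz
        linarith
      obtain ⟨c', rfl⟩ : ∃ c', c = c' + 1 := ⟨c - 1, by omega⟩
      refine ⟨2*(c'+1), ?_⟩
      have hE := periodE c' 1 (by norm_num) (by norm_num)
      rw [show 2*((c':ℝ)+1) + 1 = t by rw [← hgz, hc]; push_cast; ring] at hE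
      rw [show 4*(2*(2*(c'+1))+1) = 4*(4*c'+5) by ring]
      exact hE
    · refine ⟨2*c+1, ?_⟩
      have hg0 : 0 < t - (2*(c:ℝ)+1) := by
        have : ((m0:ℝ)) < t := lt_of_le_of_ne hfl hgz
        push_cast [hc] at this ⊢; linarith
      have hg1 : t - (2*(c:ℝ)+1) < 1 := by push_cast [hc] at hfu ⊢; linarith
      have hO := periodO c (t - (2*(c:ℝ)+1)) hg0 hg1
      rw [show 2*(c:ℝ)+1 + (t - (2*(c:ℝ)+1)) = t by ring] at hO
      rw [show 4*(2*(2*c+1)+1) = 4*(4*c+3) by ring]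
      exact hO

lemma riseG (c : ℕ) (x : ℝ) (hx : -1 < x) : F^[4*c] (x, -(2*(c:ℝ))) = (x + 2*c, 0) := by
  have := RunG c x (-(2*(c:ℝ))) hx (by linarith)
  rw [this]; simp only [Prod.mk.injEq]; exact ⟨trivial, by ring⟩

lemma descB (c : ℕ) (x : ℝ) (hx : x ≤ 1) : F^[4*c] (x, 2*(c:ℝ)) = (x - 2*c, 0) := by
  have := RunB c x (2*(c:ℝ)) hx (by linarith)
  rw [this]; simp only [Prod.mk.injEq]; exact ⟨trivial, by ring⟩

/-- window: for 0 ≤ x there is k with 2k ≤ x < 2k+2 -/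
lemma window (x : ℝ) (hx : 0 ≤ x) : ∃ k : ℕ, 2*(k:ℝ) ≤ x ∧ x < 2*(k:ℝ) + 2 := by
  refine ⟨⌊x/2⌋.toNat, ?_, ?_⟩
  · have h1 : ((⌊x/2⌋.toNat : ℤ) : ℝ) ≤ x/2 := by
      rw [Int.toNat_of_nonneg (Int.floor_nonneg.2 (by positivity))]; exact Int.floor_le _
    push_cast at h1 ⊢; linarith
  · have h2 : x/2 < ⌊x/2⌋ + 1 := Int.lt_floor_add_one _
    have h3 : (⌊x/2⌋ : ℝ) ≤ ((⌊x/2⌋.toNat : ℤ) : ℝ) := by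
      exact_mod_cast Int.self_le_toNat _
    push_cast at h2 h3 ⊢; linarith

/-- from the bottom row y = -2c (c ≥ 1), any x, reach the nonnegative x-axis -/
lemma bottom (c : ℕ) (hc : 1 ≤ c) (x : ℝ) :
    ∃ r : ℕ, ∃ t : ℝ, 0 ≤ t ∧ F^[r] (x, -(2*(c:ℝ))) = (t, 0) := by
  have hcr : (1:ℝ) ≤ c := by exact_mod_cast hc
  rcases lt_or_ge (-1 : ℝ) x with hx | hx
  · refine ⟨4*c, x + 2*c, by linarith, riseG c x hx⟩
  · -- x ≤ -1
    obtain ⟨k, hk1, hk2⟩ := window (-x) (by linarith)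
    have hu1 : -2 < x + 2*(k:ℝ) := by linarith
    have hu2 : x + 2*(k:ℝ) ≤ 0 := by linarith
    rcases le_or_gt (x + 2*(k:ℝ)) (-1) with hu3 | hu3
    · -- u ∈ (-2,-1] : D-run k, then E, then riseG (c+k)
      have hD := RunD k x (-(2*(c:ℝ))) (by linarith) (by linarith)
      have hE := ME (x + 2*(k:ℝ)) (-(2*(c:ℝ)) - 2*k) (by linarith) (by linarith) (by linarith)
      have hG := riseG (c+k) (x + 2*(k:ℝ) + 2) (by linarith)
      rw [show -(2*((c+k : ℕ):ℝ)) = -(2*(c:ℝ)) - 2*k by push_cast; ring] at hG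
      have h123 := chain (chain hD hE) hG
      refine ⟨4*(c+k) + (4 + 4*k), x + 2*(k:ℝ) + 2 + 2*((c+k:ℕ):ℝ), ?_, h123⟩
      push_cast
      linarith
    · rcases eq_or_lt_of_le hu2 with hu0 | hu4
      · -- u = 0 : x = -2k, k ≥ 1; D-run (k-1) to (-2,·), E, riseG
        obtain ⟨k', rfl⟩ : ∃ k', k = k' + 1 := by
          refine ⟨k - 1, ?_⟩
          have hk0 : k ≠ 0 := by
            rintro rfl
            push_cast at hu0
            linarith
          omega
        have hxk : x = -2*((k':ℝ)+1) := by push_cast at hu0 ⊢; linarith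
        have hk'c : (0:ℝ) ≤ k' := Nat.cast_nonneg k'
        have hD := RunD k' x (-(2*(c:ℝ))) (by linarith) (by rw [hxk]; push_cast; linarith)
        have hE := ME (x + 2*(k':ℝ)) (-(2*(c:ℝ)) - 2*k') (by linarith)
          (by rw [hxk]; push_cast; linarith) (by rw [hxk]; push_cast; linarith)
        have hG := riseG (c+k') (x + 2*(k':ℝ) + 2) (by rw [hxk]; push_cast; linarith)
        rw [show -(2*((c+k' : ℕ):ℝ)) = -(2*(c:ℝ)) - 2*k' by push_cast; ring] at hG
        have h123 := chain (chain hD hE) hG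
        refine ⟨4*(c+k') + (4 + 4*k'), x + 2*(k':ℝ) + 2 + 2*((c+k':ℕ):ℝ), ?_, h123⟩
        rw [hxk]
        push_cast
        linarith
      · -- -1 < u < 0 : D-run k then riseG (c+k)
        have hD := RunD k x (-(2*(c:ℝ))) (by linarith) (by linarith)
        have hG := riseG (c+k) (x + 2*(k:ℝ)) (by linarith)
        rw [show -(2*((c+k : ℕ):ℝ)) = -(2*(c:ℝ)) - 2*k by push_cast; ring] at hG
        have h12 := chain hD hG
        refine ⟨4*(c+k) + 4*k, x + 2*(k:ℝ) + 2*((c+k:ℕ):ℝ), ?_, h12⟩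
        push_cast
        linarith

lemma axisreach (x : ℝ) : ∃ r : ℕ, ∃ t : ℝ, 0 ≤ t ∧ F^[r] (x, 0) = (t, 0) := by
  rcases le_or_gt 0 x with hx | hx
  · exact ⟨0, x, hx, rfl⟩
  · have hC := MC x hx
    obtain ⟨r, t, ht, hr⟩ := bottom 1 le_rfl x
    rw [show -(2*((1:ℕ):ℝ)) = (-2 : ℝ) by norm_num] at hr
    exact ⟨r + 4, t, ht, by rw [Function.iterate_add_apply, hC, hr]⟩

/-- from top row y = 2a (a ≥ 1), x < 2, reach the axis -/
lemma top_small (a : ℕ) (x : ℝ) (hx : x < 2) :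
    ∃ r : ℕ, ∃ t : ℝ, 0 ≤ t ∧ F^[r] (x, 2*(a:ℝ)) = (t, 0) := by
  have ha0 : (0:ℝ) ≤ a := Nat.cast_nonneg a
  rcases le_or_gt x 1 with hx1 | hx1
  · have hB := descB a x hx1
    obtain ⟨r, t, ht, hr⟩ := axisreach (x - 2*a)
    exact ⟨r + 4*a, t, ht, by rw [Function.iterate_add_apply, hB, hr]⟩
  · have hH := MH x (2*(a:ℝ)) (by linarith) hx1 hx
    have hB := descB a (x - 2) (by linarith)
    obtain ⟨r, t, ht, hr⟩ := axisreach (x - 2 - 2*a)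
    refine ⟨r + (4*a + 4), t, ht, ?_⟩
    rw [Function.iterate_add_apply, Function.iterate_add_apply, hH, hB, hr]

lemma topreach (a : ℕ) (x : ℝ) :
    ∃ r : ℕ, ∃ t : ℝ, 0 ≤ t ∧ F^[r] (x, 2*(a:ℝ)) = (t, 0) := by
  rcases lt_or_ge x 2 with hx | hx
  · exact top_small a x hx
  · obtain ⟨k, hk1, hk2⟩ := window x (by linarith)
    have hA := RunA k x (2*(a:ℝ)) (by positivity) hk1
    obtain ⟨r, t, ht, hr⟩ := top_small (a + k) (x - 2*k) (by linarith)
    rw [show 2*(((a+k:ℕ)):ℝ) = 2*(a:ℝ) + 2*k by push_cast; ring] at hr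
    exact ⟨r + 4*k, t, ht, by rw [Function.iterate_add_apply, hA, hr]⟩

/-- main: from any point whose second coordinate is an even integer, reach nonneg axis -/
lemma reach_even (x : ℝ) (a : ℤ) :
    ∃ r : ℕ, ∃ t : ℝ, 0 ≤ t ∧ F^[r] (x, 2*(a:ℝ)) = (t, 0) := by
  rcases lt_trichotomy a 0 with ha | ha | ha
  · obtain ⟨c, hc⟩ : ∃ c : ℕ, (c:ℤ) = -a := ⟨(-a).toNat, Int.toNat_of_nonneg (by linarith)⟩
    have hc1 : 1 ≤ c := by omega
    obtain ⟨r, t, ht, hr⟩ := bottom c hc1 x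
    rw [show -(2*((c:ℕ):ℝ)) = 2*(a:ℝ) by
      have : ((c:ℤ):ℝ) = ((-a : ℤ):ℝ) := by exact_mod_cast congrArg (Int.cast : ℤ → ℝ) hc
      push_cast at this ⊢; linarith] at hr
    exact ⟨r, t, ht, hr⟩
  · subst ha; norm_num; obtain ⟨r, t, ht, hr⟩ := axisreach x; exact ⟨r, t, ht, hr⟩
  · obtain ⟨c, hc⟩ : ∃ c : ℕ, (c:ℤ) = a := ⟨a.toNat, Int.toNat_of_nonneg (by linarith)⟩
    obtain ⟨r, t, ht, hr⟩ := topreach c x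
    rw [show 2*((c:ℕ):ℝ) = 2*(a:ℝ) by
      have : ((c:ℤ):ℝ) = ((a : ℤ):ℝ) := by exact_mod_cast congrArg (Int.cast : ℤ → ℝ) hc
      push_cast at this ⊢; linarith] at hr
    exact ⟨r, t, ht, hr⟩

lemma it2 (z : ℝ × ℝ) : F^[2] z = F (F z) := rfl

lemma s_cases (y : ℝ) : s y = 1 ∨ s y = -1 := by
  unfold s; split_ifs <;> simp

lemma PL (k : ℕ) : ∀ x y : ℝ, ∃ a b : ℤ,
    F^[2*k] (x, y) = ((-1:ℝ)^k * x + ((k:ℝ) + 2*a), (-1:ℝ)^k * y + ((k:ℝ) + 2*b)) := by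
  induction k with
  | zero => intro x y; exact ⟨0, 0, by norm_num⟩
  | succ n ih =>
    intro x y
    obtain ⟨a, b, hab⟩ := ih x y
    rw [show 2*(n+1) = 2 + 2*n by ring, Function.iterate_add_apply, hab, it2]
    set u : ℝ := (-1:ℝ)^n * x + ((n:ℝ) + 2*a) with hu
    set v : ℝ := (-1:ℝ)^n * y + ((n:ℝ) + 2*b) with hv
    have hF2 : F (F (u, v)) = (-u + s v, -v + s (-u + s v)) := rfl
    rw [hF2]
    rcases s_cases v with h1 | h1 <;> rw [h1]
    · rcases s_cases (-u + 1) with h2 | h2 <;> rw [h2]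
      · exact ⟨-n - a, -n - b, by simp only [Prod.mk.injEq, hu, hv]; constructor <;> (push_cast; ring)⟩
      · exact ⟨-n - a, -n - b - 1, by simp only [Prod.mk.injEq, hu, hv]; constructor <;> (push_cast; ring)⟩
    · rcases s_cases (-u + -1) with h2 | h2 <;> rw [h2]
      · exact ⟨-n - a - 1, -n - b, by simp only [Prod.mk.injEq, hu, hv]; constructor <;> (push_cast; ring)⟩
      · exact ⟨-n - a - 1, -n - b - 1, by simp only [Prod.mk.injEq, hu, hv]; constructor <;> (push_cast; ring)⟩

lemma odd_contra (x y : ℝ) (hgrid : (∃ k : ℤ, x = (k:ℝ)) ∨ (∃ l : ℤ, y = (l:ℝ)))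
    (c : ℕ) (hodd : c % 2 = 1) (hfix : F^[2*c] (x, y) = (x, y)) : False := by
  obtain ⟨a, b, hab⟩ := PL c x y
  rw [hfix] at hab
  have hneg : (-1:ℝ)^c = -1 := Odd.neg_one_pow ⟨c/2, by omega⟩
  rw [hneg] at hab
  have h1 := congrArg Prod.fst hab
  have h2 := congrArg Prod.snd hab
  simp only at h1 h2
  rcases hgrid with ⟨K, hK⟩ | ⟨L, hL⟩
  · rw [hK] at h1
    have : (2*K : ℝ) = (c:ℝ) + 2*a := by push_cast; linarith
    have hz : (2*K : ℤ) = (c:ℤ) + 2*a := by exact_mod_cast this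
    omega
  · rw [hL] at h2
    have : (2*L : ℝ) = (c:ℝ) + 2*b := by push_cast; linarith
    have hz : (2*L : ℤ) = (c:ℤ) + 2*b := by exact_mod_cast this
    omega

lemma grid_dvd4 (x y : ℝ) (hgrid : (∃ k : ℤ, x = (k:ℝ)) ∨ (∃ l : ℤ, y = (l:ℝ)))
    (j : ℕ) (hj : F^[j] (x, y) = (x, y)) : 4 ∣ j := by
  have hdouble : F^[2*j] (x, y) = (x, y) := by
    rw [show 2*j = j + j by ring, Function.iterate_add_apply, hj, hj]
  rcases Nat.even_or_odd j with ⟨c, hc⟩ | ⟨c, hc⟩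
  · -- j = 2c
    have hfix : F^[2*c] (x, y) = (x, y) := by rw [show 2*c = j by omega]; exact hj
    rcases Nat.even_or_odd c with ⟨d, hd⟩ | ⟨d, hd⟩
    · exact ⟨d, by omega⟩
    · exact absurd hfix (by intro h; exact odd_contra x y hgrid c (by omega) h)
  · exfalso
    exact odd_contra x y hgrid j (by omega) hdouble

lemma TFT (z : ℝ × ℝ) : F ((F z).2, (F z).1) = (z.2, z.1) := by
  obtain ⟨z1, z2⟩ := z
  show F (-z1 + s z2, z2) = (z2, z1)
  show (z2, -(-z1 + s z2) + s z2) = (z2, z1)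
  simp only [Prod.mk.injEq]
  exact ⟨trivial, by ring⟩

lemma Titer (j : ℕ) : ∀ z : ℝ × ℝ, F^[j] ((F^[j] z).2, (F^[j] z).1) = (z.2, z.1) := by
  induction j with
  | zero => intro z; rfl
  | succ n ih =>
    intro z
    have e1 : F^[n+1] z = F (F^[n] z) := Function.iterate_succ_apply' F n z
    rw [e1, Function.iterate_succ_apply, TFT (F^[n] z)]
    exact ih z

lemma Finj : Function.Injective F := by
  intro a b h
  have h2 : a.2 = b.2 := congrArg Prod.fst h
  have h1 : -a.1 + s a.2 = -b.1 + s b.2 := congrArg Prod.snd h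
  rw [h2] at h1
  have : a.1 = b.1 := by linarith
  exact Prod.ext this h2

lemma reach_int_y (x : ℝ) (b : ℤ) :
    ∃ r : ℕ, ∃ t : ℝ, 0 ≤ t ∧ F^[r] (x, (b:ℝ)) = (t, 0) := by
  rcases Int.even_or_odd b with ⟨a, hb⟩ | ⟨a, hb⟩
  · obtain ⟨r, t, ht, hr⟩ := reach_even x a
    refine ⟨r, t, ht, ?_⟩
    rw [show ((b:ℤ):ℝ) = 2*(a:ℝ) by rw [hb]; push_cast; ring]
    exact hr
  · -- b odd : go two steps
    have hF2 : F (F (x, (b:ℝ))) = (-x + s (b:ℝ), -(b:ℝ) + s (-x + s (b:ℝ))) := rfl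
    rcases s_cases (-x + s (b:ℝ)) with h2 | h2
    · obtain ⟨r, t, ht, hr⟩ := reach_even (-x + s (b:ℝ)) (-a)
      refine ⟨r + 2, t, ht, ?_⟩
      rw [Function.iterate_add_apply, it2, hF2, h2]
      rw [show -(b:ℝ) + 1 = 2*((-a : ℤ):ℝ) by rw [hb]; push_cast; ring] at *
      exact hr
    · obtain ⟨r, t, ht, hr⟩ := reach_even (-x + s (b:ℝ)) (-a - 1)
      refine ⟨r + 2, t, ht, ?_⟩
      rw [Function.iterate_add_apply, it2, hF2, h2]
      rw [show -(b:ℝ) + -1 = 2*((-a - 1 : ℤ):ℝ) by rw [hb]; push_cast; ring] at *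
      exact hr

lemma reach_grid_x (k : ℤ) (y : ℝ) :
    ∃ r : ℕ, ∃ t : ℝ, 0 ≤ t ∧ F^[r] ((k:ℝ), y) = (t, 0) := by
  have hF : F ((k:ℝ), y) = (y, -(k:ℝ) + s y) := rfl
  rcases s_cases y with h1 | h1
  · obtain ⟨r, t, ht, hr⟩ := reach_int_y y (-k + 1)
    refine ⟨r + 1, t, ht, ?_⟩
    rw [Function.iterate_add_apply]
    simp only [Function.iterate_one]
    rw [hF, h1, show -(k:ℝ) + 1 = ((-k + 1 : ℤ):ℝ) by push_cast; ring]
    exact hr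
  · obtain ⟨r, t, ht, hr⟩ := reach_int_y y (-k - 1)
    refine ⟨r + 1, t, ht, ?_⟩
    rw [Function.iterate_add_apply]
    simp only [Function.iterate_one]
    rw [hF, h1, show -(k:ℝ) + -1 = ((-k - 1 : ℤ):ℝ) by push_cast; ring]
    exact hr

lemma periodic_of_x_int (k : ℤ) (y : ℝ) :
    ∃ N : ℕ, F^[4*(2*N+1)] ((k:ℝ), y) = ((k:ℝ), y) := by
  obtain ⟨r, t, ht, hr⟩ := reach_grid_x k y
  obtain ⟨N, hN⟩ := periodAxis t ht
  refine ⟨N, ?_⟩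
  apply (Finj.iterate r)
  rw [← Function.iterate_add_apply, add_comm, Function.iterate_add_apply, hr, hN]


/-- Every point of the critical set (the integer grid) is a periodic point of
`F` whose minimal period has the form `8n+4` for some `n ∈ ℕ₀`. -/
theorem grid_points_periodic_pi_div_two (x y : ℝ)
    (h : (∃ k : ℤ, x = (k : ℝ)) ∨ (∃ ℓ : ℤ, y = (ℓ : ℝ))) :
    (∃ p : ℕ, 1 ≤ p ∧ F^[p] (x, y) = (x, y)) ∧
    ∃ n : ℕ, Function.minimalPeriod F (x, y) = 8 * n + 4 := by
  -- existence of a period of the form 4*(2N+1)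
  have hper : ∃ N : ℕ, F^[4*(2*N+1)] (x, y) = (x, y) := by
    rcases h with ⟨k, hk⟩ | ⟨l, hl⟩
    · subst hk; exact periodic_of_x_int k y
    · subst hl
      obtain ⟨N, hN⟩ := periodic_of_x_int l x
      refine ⟨N, ?_⟩
      have hT := Titer (4*(2*N+1)) (((l:ℝ)), x)
      rw [hN] at hT
      exact hT
  obtain ⟨N, hN⟩ := hper
  have hP : Function.IsPeriodicPt F (4*(2*N+1)) (x, y) := hN
  constructor
  · exact ⟨4*(2*N+1), by omega, hN⟩
  · have hpos : 0 < Function.minimalPeriod F (x, y) :=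
      hP.minimalPeriod_pos (by omega)
    have hdvd : Function.minimalPeriod F (x, y) ∣ 4*(2*N+1) := hP.minimalPeriod_dvd
    have hfix : F^[Function.minimalPeriod F (x, y)] (x, y) = (x, y) :=
      Function.iterate_minimalPeriod
    obtain ⟨d, hd⟩ := grid_dvd4 x y h _ hfix
    rw [hd] at hdvd
    have hddvd : d ∣ 2*N+1 := (mul_dvd_mul_iff_left (by norm_num : (4:ℕ) ≠ 0)).1 hdvd
    obtain ⟨e, he⟩ := hddvd
    rcases Nat.even_or_odd d with ⟨f, hf⟩ | ⟨f, hf⟩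
    · exfalso
      rw [hf] at he
      have h2 : (f+f)*e = 2*(f*e) := by ring
      omega
    · exact ⟨f, by omega⟩
end

section
/- Let F(x,y) = (y, -x + s(y)). Every (x,y) ∈ ℝ² is a periodic point of F whose minimal period p is determined as follows, where k = ⌊x⌋, ℓ = ⌊y⌋ and V_{a,b} = max(|a+b+1| − 1, |a−b|) for a,b ∈ ℤ: (a) if x ∉ ℤ, y ∉ ℤ and (x−k, y−ℓ) ≠ (1/2, 1/2), then p = 8V_{k,ℓ} + 4; if x−k = 1/2 and y−ℓ = 1/2, then p = 2V_{k,ℓ}+1 when V_{k,ℓ} is even and p = 4V_{k,ℓ}+2 when V_{k,ℓ} is odd; (b) if x ∈ ℤ and y ∉ ℤ, then p = 8V_{k,ℓ}+4 when k is even and p = 8V_{k−1,ℓ}+4 when k is odd; (c) if x ∉ ℤ and y ∈ ℤ, then p = 8V_{k,ℓ}+4 when ℓ is even and p = 8V_{k,ℓ−1}+4 when ℓ is odd; (d) if x ∈ ℤ and y ∈ ℤ, then p = 8V_{k',ℓ'}+4, where k' = k if k is even and k' = k−1 if k is odd, and ℓ' = ℓ if ℓ is even and ℓ' = ℓ−1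 if ℓ is odd. -/
def Vc (a b : ℤ) : ℤ := max (|a + b + 1| - 1) |a - b|

/-!
Split each coordinate as `2x = 2k + 1 + d` with `|d| ≤ 1`: `k` indexes the unit cell containing
`x`, `d` is twice the offset of `x` from the centre of that cell, and a point on an edge is assigned
to the neighbouring cell of even index. With this choice `s y` is the sign of the cell row (the edge
`y = 0` belongs to row `0`), so `F` maps the cell `(k, ℓ)` to `cellMap (k, ℓ)` and turns the offset
by a quarter turn; as the splitting is unique, a point returns after `n` steps exactly when its
cell and its offset do. The cells with `Vc k ℓ = V` form a cycle of `4V + 2` cells along which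
`cellMap` advances `3V + 2` places, so the cell returns after `n` steps iff `4V + 2 ∣ n (3V + 2)`,
i.e. iff `2V + 1 ∣ n` and `V` or `n` is even; a nonzero offset adds the condition `4 ∣ n`.
-/

open Function

structure IsCellRep (x : ℝ) (k : ℤ) (d : ℝ) : Prop where
  two_mul_eq : 2 * x = 2 * k + 1 + d
  abs_le_one : |d| ≤ 1
  even_of_abs_eq_one : |d| = 1 → Even k

namespace IsCellRep

variable {x y : ℝ} {k ℓ : ℤ} {d e : ℝ}

theorem eq_of_isCellRep (h : IsCellRep x k d) (h' : IsCellRep y k d) : x = y := by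
  linarith [h.two_mul_eq, h'.two_mul_eq]

-- Two distinct cells containing `x` are adjacent, and only one of them has even index.
theorem unique (h : IsCellRep x k d) (h' : IsCellRep x ℓ e) : k = ℓ ∧ d = e := by
  have hd := abs_le.mp h.abs_le_one
  have he := abs_le.mp h'.abs_le_one
  have hdiff : ((k - ℓ : ℤ) : ℝ) * 2 = e - d := by push_cast; linarith [h.two_mul_eq, h'.two_mul_eq]
  have hk := h.even_of_abs_eq_one
  have hℓ := h'.even_of_abs_eq_one
  rw [Int.even_iff] at hk hℓ
  have hlo : -1 ≤ k - ℓ := by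
    have : (-1 : ℝ) ≤ ((k - ℓ : ℤ) : ℝ) := by linarith
    exact_mod_cast this
  have hhi : k - ℓ ≤ 1 := by
    have : ((k - ℓ : ℤ) : ℝ) ≤ 1 := by linarith
    exact_mod_cast this
  have hkℓ : k = ℓ := by
    rcases (show k - ℓ = -1 ∨ k - ℓ = 0 ∨ k - ℓ = 1 by omega) with h1 | h0 | h1
    · rw [h1] at hdiff
      have := hk (by rw [show d = 1 by push_cast at hdiff; linarith]; simp)
      have := hℓ (by rw [show e = -1 by push_cast at hdiff; linarith]; simp)
      omega
    · omega
    · rw [h1] at hdiff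
      have := hk (by rw [show d = -1 by push_cast at hdiff; linarith]; simp)
      have := hℓ (by rw [show e = 1 by push_cast at hdiff; linarith]; simp)
      omega
  subst hkℓ
  exact ⟨rfl, by linarith [h.two_mul_eq, h'.two_mul_eq]⟩

theorem s_eq (h : IsCellRep y ℓ e) : s y = if 0 ≤ ℓ then 1 else -1 := by
  have he := abs_le.mp h.abs_le_one
  have h2 := h.two_mul_eq
  unfold s
  rcases (show 0 ≤ ℓ ∨ ℓ = -1 ∨ ℓ ≤ -2 by omega) with hℓ | hℓ | hℓ
  · have : (0 : ℝ) ≤ ℓ := by exact_mod_cast hℓ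
    rw [if_pos hℓ, if_pos (by linarith)]
  · -- the cell index `-1` is odd, so `y` does not lie on the edge `y = 0`
    have hne : e ≠ 1 := fun he1 => by
      have := h.even_of_abs_eq_one (by simp [he1]); rw [hℓ] at this; exact absurd this (by decide)
    have : e < 1 := lt_of_le_of_ne he.2 hne
    subst hℓ
    rw [if_neg (by push_cast at h2; linarith), if_neg (by norm_num)]
  · have : (ℓ : ℝ) ≤ -2 := by exact_mod_cast hℓ
    rw [if_neg (by linarith), if_neg (by omega)]

theorem neg_add_s (hx : IsCellRep x k d) (hy : IsCellRep y ℓ e) :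
    IsCellRep (-x + s y) (if 0 ≤ ℓ then -k else -k - 2) (-d) where
  two_mul_eq := by
    have := hx.two_mul_eq
    rw [hy.s_eq]; split_ifs <;> push_cast <;> linarith
  abs_le_one := by rw [abs_neg]; exact hx.abs_le_one
  even_of_abs_eq_one hd := by
    have := hx.even_of_abs_eq_one (by rwa [abs_neg] at hd)
    split_ifs
    · exact this.neg
    · exact this.neg.sub even_two

end IsCellRep

def cellMap (c : ℤ × ℤ) : ℤ × ℤ := (c.2, if 0 ≤ c.2 then -c.1 else -c.1 - 2)

def quarterTurn (d : ℝ × ℝ) : ℝ × ℝ := (d.2, -d.1)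

def IsPointRep (q : ℝ × ℝ) (c : ℤ × ℤ) (d : ℝ × ℝ) : Prop :=
  IsCellRep q.1 c.1 d.1 ∧ IsCellRep q.2 c.2 d.2

namespace IsPointRep

variable {q : ℝ × ℝ} {c : ℤ × ℤ} {d : ℝ × ℝ}

theorem map_F (h : IsPointRep q c d) : IsPointRep (F q) (cellMap c) (quarterTurn d) :=
  ⟨h.2, h.1.neg_add_s h.2⟩

theorem iterate_F (h : IsPointRep q c d) (n : ℕ) :
    IsPointRep (F^[n] q) (cellMap^[n] c) (quarterTurn^[n] d) := by
  induction n with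
  | zero => exact h
  | succ n ih => simpa only [iterate_succ_apply'] using ih.map_F

theorem isPeriodicPt_iff (h : IsPointRep q c d) {n : ℕ} :
    IsPeriodicPt F n q ↔ IsPeriodicPt cellMap n c ∧ IsPeriodicPt quarterTurn n d := by
  have hn := h.iterate_F n
  constructor
  · intro hq
    rw [hq.eq] at hn
    obtain ⟨hc₁, hd₁⟩ := h.1.unique hn.1
    obtain ⟨hc₂, hd₂⟩ := h.2.unique hn.2
    exact ⟨Prod.ext hc₁.symm hc₂.symm, Prod.ext hd₁.symm hd₂.symm⟩
  · rintro ⟨hc, hd⟩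
    rw [hc.eq, hd.eq] at hn
    exact Prod.ext (hn.1.eq_of_isCellRep h.1) (hn.2.eq_of_isCellRep h.2)

end IsPointRep

theorem isPeriodicPt_quarterTurn_iff {d : ℝ × ℝ} {n : ℕ} :
    IsPeriodicPt quarterTurn n d ↔ d = 0 ∨ 4 ∣ n := by
  have h4 : IsPeriodicPt quarterTurn 4 d := by
    simp [IsPeriodicPt, IsFixedPt, quarterTurn, iterate_succ_apply']
  rw [IsPeriodicPt, IsFixedPt, ← h4.iterate_mod_apply, Nat.dvd_iff_mod_eq_zero]
  obtain ⟨d₁, d₂⟩ := d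
  have hr : n % 4 < 4 := Nat.mod_lt n (by norm_num)
  generalize n % 4 = r at hr ⊢
  interval_cases r <;>
    simp only [iterate_zero, id_eq, iterate_succ_apply', quarterTurn, neg_neg,
      Prod.ext_iff, Prod.fst_zero, Prod.snd_zero, or_true, one_ne_zero, OfNat.ofNat_ne_zero,
      or_false]
  all_goals constructor <;> rintro ⟨h₁, h₂⟩ <;> constructor <;> linarith

/-- The cells `(k, ℓ)` with `Vc k ℓ = V` lie on the boundary of the tilted rectangle
`|k + ℓ + 1| ≤ V + 1`, `|k - ℓ| ≤ V`; `ringCell V J`, `0 ≤ J < 4 * V + 2`, runs once around it,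
starting at `(V, 0)`. -/
def ringCell (V J : ℤ) : ℤ × ℤ :=
  (if J ≤ 2 * V then V - J else J - 3 * V - 2,
   if J ≤ V then J else if J ≤ 3 * V + 1 then 2 * V - J else J - 4 * V - 2)

def ringPoint (V j : ℤ) : ℤ × ℤ := ringCell V (j % (4 * V + 2))

section Ring

variable {V : ℤ}

theorem ringPoint_eq_ringCell {j J : ℤ} (h₀ : 0 ≤ J) (h₁ : J < 4 * V + 2)
    (hj : 4 * V + 2 ∣ j - J) : ringPoint V j = ringCell V J := by
  rw [ringPoint, ← Int.emod_eq_of_lt h₀ h₁]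
  exact congrArg _ (Int.modEq_iff_dvd.mpr hj).symm

theorem ringPoint_add (hV : 0 ≤ V) (j : ℤ) :
    ringPoint V (j + (3 * V + 2)) = cellMap (ringPoint V j) := by
  have hN : 4 * V + 2 ≠ 0 := by omega
  have h₀ := Int.emod_nonneg j hN
  have h₁ := Int.emod_lt_of_pos j (by omega : 0 < 4 * V + 2)
  obtain ⟨t, ht⟩ := Int.modEq_iff_dvd.mp (Int.mod_modEq j (4 * V + 2))
  set J := j % (4 * V + 2)
  rw [show ringPoint V j = ringCell V J from rfl]
  by_cases hwrap : J + (3 * V + 2) < 4 * V + 2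
  · rw [ringPoint_eq_ringCell (J := J + (3 * V + 2)) (by omega) hwrap
      ⟨t, by linear_combination ht⟩]
    simp only [ringCell, cellMap, Prod.mk.injEq]
    split_ifs <;> omega
  · rw [ringPoint_eq_ringCell (J := J + (3 * V + 2) - (4 * V + 2)) (by omega) (by omega)
      ⟨t + 1, by linear_combination ht⟩]
    simp only [ringCell, cellMap, Prod.mk.injEq]
    split_ifs <;> omega

theorem ringPoint_eq_iff (hV : 0 ≤ V) {i j : ℤ} :
    ringPoint V i = ringPoint V j ↔ i ≡ j [ZMOD 4 * V + 2] := by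
  refine ⟨fun h => ?_, fun h => congrArg (ringCell V) h⟩
  have hN : 4 * V + 2 ≠ 0 := by omega
  have := Int.emod_nonneg i hN
  have := Int.emod_nonneg j hN
  have := Int.emod_lt_of_pos i (by omega : 0 < 4 * V + 2)
  have := Int.emod_lt_of_pos j (by omega : 0 < 4 * V + 2)
  simp only [ringPoint, ringCell, Prod.mk.injEq] at h
  unfold Int.ModEq
  split_ifs at h <;> omega

theorem vc_nonneg (k ℓ : ℤ) : 0 ≤ Vc k ℓ := by
  simp only [Vc, abs_eq_max_neg]; omega

theorem exists_ringPoint_eq (k ℓ : ℤ) : ∃ j, ringPoint (Vc k ℓ) j = (k, ℓ) := by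
  have hV : k + ℓ ≤ Vc k ℓ ∧ -k - ℓ - 2 ≤ Vc k ℓ ∧ k - ℓ ≤ Vc k ℓ ∧ ℓ - k ≤ Vc k ℓ ∧
      (Vc k ℓ = k + ℓ ∨ Vc k ℓ = -k - ℓ - 2 ∨ Vc k ℓ = k - ℓ ∨ Vc k ℓ = ℓ - k) := by
    simp only [Vc, abs_eq_max_neg]; omega
  generalize Vc k ℓ = V at hV ⊢
  by_cases hℓ : 0 ≤ ℓ
  · refine ⟨V - k, ?_⟩
    rw [ringPoint_eq_ringCell (J := V - k) (by omega) (by omega) (by simp)]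
    simp only [ringCell, Prod.mk.injEq]
    split_ifs <;> omega
  · refine ⟨3 * V + 2 + k, ?_⟩
    rw [ringPoint_eq_ringCell (J := 3 * V + 2 + k) (by omega) (by omega) (by simp)]
    simp only [ringCell, Prod.mk.injEq]
    split_ifs <;> omega

end Ring

theorem isPeriodicPt_cellMap_iff (k ℓ : ℤ) {n : ℕ} :
    IsPeriodicPt cellMap n (k, ℓ) ↔ 4 * Vc k ℓ + 2 ∣ n * (3 * Vc k ℓ + 2) := by
  obtain ⟨j, hj⟩ := exists_ringPoint_eq k ℓ
  have hV := vc_nonneg k ℓ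
  have hsemi : Semiconj (ringPoint (Vc k ℓ)) (· + (3 * Vc k ℓ + 2)) cellMap :=
    ringPoint_add hV
  rw [IsPeriodicPt, IsFixedPt, ← hj, ← hsemi.iterate_right n j, add_right_iterate,
    ringPoint_eq_iff hV, Int.modEq_iff_dvd, nsmul_eq_mul, sub_add_cancel_left, dvd_neg]

theorem IsCoprime.mul_dvd_iff {R : Type*} [CommSemiring R] {x y z : R} (h : IsCoprime x y) :
    x * y ∣ z ↔ x ∣ z ∧ y ∣ z :=
  ⟨fun hz => ⟨dvd_of_mul_right_dvd hz, dvd_of_mul_left_dvd hz⟩, fun hz => h.mul_dvd hz.1 hz.2⟩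

theorem isCoprime_two_mul_add_one_two (V : ℤ) : IsCoprime (2 * V + 1) 2 := ⟨1, -V, by ring⟩

theorem four_mul_add_two_dvd_mul_iff (V n : ℤ) :
    4 * V + 2 ∣ n * (3 * V + 2) ↔ 2 * V + 1 ∣ n ∧ (Even V ∨ Even n) := by
  have hcop : IsCoprime (2 * V + 1) (3 * V + 2) := ⟨-3, 2, by ring⟩
  have hpar : Even (3 * V + 2) ↔ Even V := by
    simp only [Int.even_iff]; omega
  rw [show 4 * V + 2 = (2 * V + 1) * 2 by ring, (isCoprime_two_mul_add_one_two V).mul_dvd_iff,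
    ← even_iff_two_dvd, Int.even_mul, hpar, or_comm]
  exact and_congr_left' ⟨hcop.dvd_of_dvd_mul_right, fun h => h.mul_right _⟩

theorem isPeriodicPt_F_iff {x y : ℝ} {k ℓ : ℤ} {d₁ d₂ : ℝ} (hx : IsCellRep x k d₁)
    (hy : IsCellRep y ℓ d₂) {n : ℕ} :
    IsPeriodicPt F n (x, y) ↔
      (2 * Vc k ℓ + 1 ∣ n ∧ (Even (Vc k ℓ) ∨ Even (n : ℤ))) ∧ ((d₁ = 0 ∧ d₂ = 0) ∨ 4 ∣ n) := by
  rw [IsPointRep.isPeriodicPt_iff (c := (k, ℓ)) (d := (d₁, d₂)) ⟨hx, hy⟩,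
    isPeriodicPt_cellMap_iff, four_mul_add_two_dvd_mul_iff, isPeriodicPt_quarterTurn_iff,
    Prod.mk_eq_zero]

theorem minimalPeriod_eq_of_isPeriodicPt_iff {α : Type*} {f : α → α} {x : α} {P : ℤ}
    (hP : 0 ≤ P) (h : ∀ n : ℕ, IsPeriodicPt f n x ↔ P ∣ n) : (minimalPeriod f x : ℤ) = P := by
  lift P to ℕ using hP
  simp only [Int.natCast_dvd_natCast] at h
  exact congrArg _ (Nat.dvd_antisymm (isPeriodicPt_iff_minimalPeriod_dvd.1 ((h P).2 dvd_rfl))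
    ((h _).1 (isPeriodicPt_minimalPeriod f x)))

theorem minimalPeriod_F {x y : ℝ} {k ℓ : ℤ} {d₁ d₂ : ℝ} (hx : IsCellRep x k d₁)
    (hy : IsCellRep y ℓ d₂) :
    (minimalPeriod F (x, y) : ℤ) =
      if d₁ = 0 ∧ d₂ = 0 then (if Even (Vc k ℓ) then 2 * Vc k ℓ + 1 else 4 * Vc k ℓ + 2)
      else 8 * Vc k ℓ + 4 := by
  have hV := vc_nonneg k ℓ
  have hcop := isCoprime_two_mul_add_one_two (Vc k ℓ)
  refine minimalPeriod_eq_of_isPeriodicPt_iff (by split_ifs <;> omega) fun n => ?_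
  rw [isPeriodicPt_F_iff hx hy]
  split_ifs with hd hVe
  · simp [hd, hVe]
  · rw [show 4 * Vc k ℓ + 2 = (2 * Vc k ℓ + 1) * 2 by ring, hcop.mul_dvd_iff]
    simp [hd, hVe, even_iff_two_dvd]
  · rw [show 8 * Vc k ℓ + 4 = (2 * Vc k ℓ + 1) * 2 ^ 2 by ring, hcop.pow_right.mul_dvd_iff,
      show (2 : ℤ) ^ 2 = (4 : ℕ) by norm_num, Int.natCast_dvd_natCast]
    have heven : 4 ∣ n → Even (n : ℤ) := fun h => by rw [Int.even_coe_nat, Nat.even_iff]; omega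
    simp only [hd, false_or]
    exact ⟨fun h => ⟨h.1.1, h.2⟩, fun h => ⟨⟨h.1, Or.inr (heven h.2)⟩, h.2⟩⟩

theorem minimalPeriod_F_of_ne_zero {x y : ℝ} {k ℓ : ℤ} {d₁ d₂ : ℝ} (hx : IsCellRep x k d₁)
    (hy : IsCellRep y ℓ d₂) (hd : d₁ ≠ 0 ∨ d₂ ≠ 0) :
    (minimalPeriod F (x, y) : ℤ) = 8 * Vc k ℓ + 4 := by
  rw [minimalPeriod_F hx hy, if_neg (by tauto)]

theorem isCellRep_floor {x : ℝ} (hx : ∀ a : ℤ, x ≠ a) :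
    IsCellRep x ⌊x⌋ (2 * (x - ⌊x⌋) - 1) where
  two_mul_eq := by ring
  abs_le_one := abs_le.mpr ⟨by linarith [Int.floor_le x], by linarith [Int.lt_floor_add_one x]⟩
  even_of_abs_eq_one h := by
    have hlt : (⌊x⌋ : ℝ) < x := (Int.floor_le x).lt_of_ne (hx ⌊x⌋).symm
    rcases abs_eq (zero_le_one' ℝ) |>.mp h with h | h <;> linarith [Int.lt_floor_add_one x]

theorem isCellRep_of_isInt {x : ℝ} (hx : ∃ a : ℤ, x = a) :
    IsCellRep x (if Even ⌊x⌋ then ⌊x⌋ else ⌊x⌋ - 1) (if Even ⌊x⌋ then -1 else 1) := by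
  obtain ⟨a, rfl⟩ := hx
  rw [Int.floor_intCast]
  split_ifs with ha
  · exact ⟨by ring, by norm_num, fun _ => ha⟩
  · exact ⟨by push_cast; ring, by norm_num, fun _ => Int.even_sub_one.mpr ha⟩

theorem exists_isCellRep (x : ℝ) : ∃ k d, IsCellRep x k d := by
  by_cases hx : ∃ a : ℤ, x = a
  · exact ⟨_, _, isCellRep_of_isInt hx⟩
  · push Not at hx
    exact ⟨_, _, isCellRep_floor hx⟩

theorem minimalPeriod_F_pos (x y : ℝ) : 0 < minimalPeriod F (x, y) := by
  obtain ⟨k, d₁, hx⟩ := exists_isCellRep x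
  obtain ⟨ℓ, d₂, hy⟩ := exists_isCellRep y
  have hq := minimalPeriod_F hx hy
  have := vc_nonneg k ℓ
  split_ifs at hq <;> omega

/-- Algorithmic determination of the minimal period of every point of `ℝ²`
under `F` (the case `α = π/2`), in terms of `k = ⌊x⌋`, `ℓ = ⌊y⌋` and the
values `V_{a,b} = max (|a+b+1| - 1) |a-b|`. -/
theorem period_algorithm_pi_div_two (x y : ℝ) :
    let k : ℤ := ⌊x⌋
    let ℓ : ℤ := ⌊y⌋
    let mp : ℤ := (Function.minimalPeriod F (x, y) : ℤ)
    0 < Function.minimalPeriod F (x, y) ∧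
    -- (a) x ∉ ℤ and y ∉ ℤ
    ((∀ a : ℤ, x ≠ (a : ℝ)) → (∀ b : ℤ, y ≠ (b : ℝ)) →
      ((¬(x - (k : ℝ) = 1/2 ∧ y - (ℓ : ℝ) = 1/2) → mp = 8 * Vc k ℓ + 4) ∧
       (x - (k : ℝ) = 1/2 → y - (ℓ : ℝ) = 1/2 →
         (Even (Vc k ℓ) → mp = 2 * Vc k ℓ + 1) ∧
         (Odd (Vc k ℓ) → mp = 4 * Vc k ℓ + 2)))) ∧
    -- (b) x ∈ ℤ and y ∉ ℤ
    ((∃ a : ℤ, x = (a : ℝ)) → (∀ b : ℤ, y ≠ (b : ℝ)) →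
      ((Even k → mp = 8 * Vc k ℓ + 4) ∧ (Odd k → mp = 8 * Vc (k - 1) ℓ + 4))) ∧
    -- (c) x ∉ ℤ and y ∈ ℤ
    ((∀ a : ℤ, x ≠ (a : ℝ)) → (∃ b : ℤ, y = (b : ℝ)) →
      ((Even ℓ → mp = 8 * Vc k ℓ + 4) ∧ (Odd ℓ → mp = 8 * Vc k (ℓ - 1) + 4))) ∧
    -- (d) x ∈ ℤ and y ∈ ℤ
    ((∃ a : ℤ, x = (a : ℝ)) → (∃ b : ℤ, y = (b : ℝ)) →
      mp = 8 * Vc (if Even k then k else k - 1) (if Even ℓ then ℓ else ℓ - 1) + 4) := by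
  intro k ℓ mp
  have hne (z : ℝ) : (if Even ⌊z⌋ then (-1 : ℝ) else 1) ≠ 0 := by
    split_ifs <;> norm_num
  have half (z : ℝ) : 2 * (z - ⌊z⌋) - 1 = 0 ↔ z - ⌊z⌋ = 1 / 2 := by
    constructor <;> intro h <;> linarith
  refine ⟨minimalPeriod_F_pos x y, fun hx hy => ?_, fun hx hy => ?_, fun hx hy => ?_,
    fun hx hy => ?_⟩
  · have hmp : mp = _ := minimalPeriod_F (isCellRep_floor hx) (isCellRep_floor hy)
    rw [hmp]
    refine ⟨fun h => if_neg fun h' => h ⟨(half x).1 h'.1, (half y).1 h'.2⟩, fun h₁ h₂ => ?_⟩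
    rw [if_pos ⟨(half x).2 h₁, (half y).2 h₂⟩]
    exact ⟨fun h => if_pos h, fun h => if_neg (Int.not_even_iff_odd.mpr h)⟩
  · have hmp : mp = _ := minimalPeriod_F_of_ne_zero (isCellRep_of_isInt hx)
      (isCellRep_floor hy) (.inl (hne x))
    exact ⟨fun h => by rwa [if_pos h] at hmp,
      fun h => by rwa [if_neg (Int.not_even_iff_odd.mpr h)] at hmp⟩
  · have hmp : mp = _ := minimalPeriod_F_of_ne_zero (isCellRep_floor hx)
      (isCellRep_of_isInt hy) (.inr (hne y))
    exact ⟨fun h => by rwa [if_pos h] at hmp,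
      fun h => by rwa [if_neg (Int.not_even_iff_odd.mpr h)] at hmp⟩
  · exact minimalPeriod_F_of_ne_zero (isCellRep_of_isInt hx) (isCellRep_of_isInt hy)
      (.inl (hne x))
end

section
/- For all k,ℓ ∈ ℤ, the integer max(|2k+1|, 2|k+ℓ+1| − 1, |2ℓ+1|) (which is the value of the first integral V of the α = 2π/3 map at the hexagon center p_{k,ℓ} = (2k+ℓ+3/2, √3(ℓ+1/2))) is odd; and for every odd natural number c, the set {(k,ℓ) ∈ ℤ² : max(|2k+1|, 2|k+ℓ+1| − 1, |2ℓ+1|) = c} has exactly 3c+1 elements. -/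
/-!
Each of `|2k+1|`, `2|k+ℓ+1| - 1`, `|2ℓ+1|` is odd, hence so is their maximum. The sublevel set
`{V < 2n}` is the lattice hexagon `-n ≤ k, ℓ ≤ n-1`, `-n-1 ≤ k+ℓ ≤ n-1`; its columns have
`n+1, …, 2n` and then `2n, …, n+1` points, so it has `n(3n+1)` points. As `V` is odd, the level
set `{V = 2n+1}` is `{V < 2n+2} \ {V < 2n}`, with `(n+1)(3n+4) - n(3n+1) = 3(2n+1)+1` points.
-/

open Finset

-- the value `V(p_{k,ℓ})` of the first integral at the hexagon center
def centerLevel (k l : ℤ) : ℤ :=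
  max (max |2 * k + 1| (2 * |k + l + 1| - 1)) |2 * l + 1|

theorem odd_centerLevel (k l : ℤ) : Odd (centerLevel k l) :=
  max_rec' Odd (max_rec' Odd (odd_abs.2 (odd_two_mul_add_one k)) ⟨|k + l + 1| - 1, by ring⟩)
    (odd_abs.2 (odd_two_mul_add_one l))

theorem centerLevel_lt_two_mul_iff (n : ℕ) (k l : ℤ) :
    centerLevel k l < 2 * n ↔
      (-n ≤ k ∧ k ≤ n - 1) ∧ (-n ≤ l ∧ l ≤ n - 1) ∧ (-n - 1 ≤ k + l ∧ k + l ≤ n - 1) := by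
  simp only [centerLevel, max_lt_iff, abs_lt]
  cases abs_cases (k + l + 1) <;> omega

noncomputable def hexBall (n : ℕ) : Finset (ℤ × ℤ) :=
  {p ∈ Icc (-n : ℤ) (n - 1) ×ˢ Icc (-n : ℤ) (n - 1) | -n - 1 ≤ p.1 + p.2 ∧ p.1 + p.2 ≤ n - 1}

theorem mem_hexBall {n : ℕ} {p : ℤ × ℤ} : p ∈ hexBall n ↔ centerLevel p.1 p.2 < 2 * n := by
  rw [centerLevel_lt_two_mul_iff, hexBall, mem_filter, mem_product, mem_Icc, mem_Icc, and_assoc]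

theorem hexBall_mono {m n : ℕ} (h : m ≤ n) : hexBall m ⊆ hexBall n := fun p hp ↦ by
  rw [mem_hexBall] at hp ⊢
  omega

noncomputable def hexColumn (n i : ℕ) : Finset (ℤ × ℤ) :=
  {(i : ℤ) - n} ×ˢ Icc (max (-(n : ℤ)) (-1 - i)) (min (n - 1) (2 * n - 1 - i))

theorem hexBall_eq_biUnion_hexColumn (n : ℕ) :
    hexBall n = (range (2 * n)).biUnion (hexColumn n) := by
  ext ⟨k, l⟩
  simp only [mem_hexBall, centerLevel_lt_two_mul_iff, hexColumn, mem_biUnion, mem_range,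
    mem_product, mem_singleton, mem_Icc]
  constructor
  · rintro ⟨hk, hl, hkl⟩
    exact ⟨(k + n).toNat, by omega, by omega, by omega, by omega⟩
  · rintro ⟨i, hi, rfl, hl⟩
    omega

theorem card_hexColumn (n i : ℕ) (hi : i < 2 * n) :
    #(hexColumn n i) = if i < n then n + 1 + i else 3 * n - i := by
  rw [hexColumn, card_product, card_singleton, one_mul, Int.card_Icc]
  split_ifs <;> omega

theorem card_hexBall (n : ℕ) : #(hexBall n) = n * (3 * n + 1) := by
  rw [hexBall_eq_biUnion_hexColumn, card_biUnion]
  · rw [sum_congr rfl fun i hi ↦ card_hexColumn n i (mem_range.1 hi), two_mul, sum_range_add,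
      ← sum_add_distrib, sum_congr rfl fun i hi ↦ ?_, sum_const, card_range, smul_eq_mul]
    -- column `i` and column `n + i` together have `3n + 1` points
    have := mem_range.1 hi
    rw [if_pos this, if_neg (by omega)]
    omega
  · intro i _ j _ hij
    simp only [Function.onFun, hexColumn, disjoint_product, disjoint_singleton]
    exact Or.inl (by omega)

theorem setOf_centerLevel_eq (n : ℕ) :
    {p : ℤ × ℤ | centerLevel p.1 p.2 = 2 * n + 1} = ↑(hexBall (n + 1) \ hexBall n) := by
  ext p
  have := Int.odd_iff.1 (odd_centerLevel p.1 p.2)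
  rw [Set.mem_ofPred_eq, coe_sdiff, Set.mem_sdiff, mem_coe, mem_coe, mem_hexBall, mem_hexBall]
  omega

theorem ncard_setOf_centerLevel_eq (n : ℕ) :
    {p : ℤ × ℤ | centerLevel p.1 p.2 = 2 * n + 1}.ncard = 3 * (2 * n + 1) + 1 := by
  have h := card_sdiff_add_card_eq_card (hexBall_mono (Nat.le_succ n))
  rw [card_hexBall, card_hexBall] at h
  rw [setOf_centerLevel_eq, Set.ncard_coe_finset]
  linarith

/-- The value of the first integral of the `α = 2π/3` map at a hexagon center
`p_{k,ℓ}` is always odd, and each odd level `c` contains exactly `3c+1`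
hexagon centers. -/
theorem hexagon_centers_two_pi_div_three :
    (∀ k ℓ : ℤ, Odd (max (max (|2 * k + 1|) (2 * |k + ℓ + 1| - 1)) (|2 * ℓ + 1|))) ∧
    ∀ c : ℕ, Odd c →
      {p : ℤ × ℤ |
        max (max (|2 * p.1 + 1|) (2 * |p.1 + p.2 + 1| - 1)) (|2 * p.2 + 1|)
          = (c : ℤ)}.ncard = 3 * c + 1 := by
  show (∀ k ℓ, Odd (centerLevel k ℓ)) ∧
    ∀ c : ℕ, Odd c → {p : ℤ × ℤ | centerLevel p.1 p.2 = c}.ncard = 3 * c + 1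
  refine ⟨odd_centerLevel, ?_⟩
  rintro c ⟨n, rfl⟩
  push_cast
  exact ncard_setOf_centerLevel_eq n
end
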